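/- arXiv:1402.2123 — 7 statements merged into one kernel-verified Lean document; each statement's English description precedes it below -/
import Mathlib

section
/- If f : X → Y is a standard ε-isometry between real Banach spaces (i.e., f(0) = 0 and | ‖f(x) − f(y)‖ − ‖x − y‖ | ≤ ε for all x, y ∈ X), then for every x* ∈ X* there exists φ ∈ Y* with ‖φ‖ = ‖x*‖ such that |⟨φ, f(x)⟩ − ⟨x*, x⟩| ≤ 4ε‖x*‖ for all x ∈ X. -/
/-!
A norming functional `ψ` of `f v - f (-v)` squeezes `ψ (f x)` between `‖v‖ - ‖v - x‖` and
`‖v + x‖ - ‖v‖`, up to `3 ε`. Along a ray `v = t • u` through a point `u` where the norm is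
differentiable, both bounds tend to `d x`, `d` the derivative of the norm at `u`; so on finitely
many points `d` is `3 ε`-close to `ψ ∘ f` for some `ψ` in the unit ball. In a finite-dimensional
space the norm is differentiable on a dense set, hence by Hahn–Banach the closed convex hull of
these derivatives is the whole unit ball of the dual, and the functionals that are approximable in
this sense form a closed convex set. Restricting to the span of finitely many points and using
Banach–Alaoglu to pass to all of `X` gives `φ` in the unit ball with `|φ (f x) - x* x| ≤ 3 ε` for
`‖x*‖ = 1`; since `f` grows linearly, `‖φ‖ ≥ ‖x*‖`, and rescaling finishes the proof.
-/

open Filter Metric Set Topology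

section NormDerivative

variable {E : Type*} [NormedAddCommGroup E] [NormedSpace ℝ E]

theorem HasFDerivAt.tendsto_norm_smul_add_sub_norm_smul {u : E} {d : StrongDual ℝ E}
    (hd : HasFDerivAt (‖·‖) d u) (x : E) :
    Tendsto (fun t : ℝ => ‖t • u + x‖ - ‖t • u‖) atTop (𝓝 (d x)) := by
  have hd' : HasFDerivAt (‖·‖) d (u + (0 : ℝ) • x) := by simpa using hd
  have hline : HasDerivAt (fun s : ℝ => ‖u + s • x‖) (d x) 0 := by
    have hray : HasDerivAt (fun s : ℝ => u + s • x) x 0 := by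
      simpa using ((hasDerivAt_id (0 : ℝ)).smul_const x).const_add u
    exact hd'.comp_hasDerivAt 0 hray
  refine (hline.tendsto_slope_zero_right.comp tendsto_inv_atTop_nhdsGT_zero).congr' ?_
  filter_upwards [eventually_gt_atTop 0] with t ht
  have hsmul : t • u + x = t • (u + t⁻¹ • x) := by
    rw [smul_add, smul_smul, mul_inv_cancel₀ ht.ne', one_smul]
  simp only [Function.comp_apply, zero_add, zero_smul, add_zero, inv_inv, smul_eq_mul]
  rw [hsmul, norm_smul, norm_smul, Real.norm_eq_abs, _root_.abs_of_pos ht, mul_sub]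

theorem exists_hasFDerivAt_norm_sub_lt_apply [FiniteDimensional ℝ E] (w : E) {δ : ℝ}
    (hδ : 0 < δ) : ∃ (u : E) (d : StrongDual ℝ E), HasFDerivAt (‖·‖) d u ∧ ‖w‖ - δ < d w := by
  obtain ⟨u, hu, hwu⟩ := Metric.mem_closure_iff.1 (dense_differentiableAt_norm (E := E) w)
    (δ / 2) (half_pos hδ)
  set d := fderiv ℝ (‖·‖) u
  have hd : ‖d‖ ≤ 1 := by
    simpa using norm_fderiv_le_of_lipschitz ℝ lipschitzWith_one_norm (x₀ := u)
  have hdwu : |d (w - u)| ≤ ‖w - u‖ := by simpa using d.le_of_opNorm_le hd (w - u)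
  have hdw : d w = ‖u‖ + d (w - u) := by
    rw [map_sub, DifferentiableAt.fderiv_norm_self hu]; ring
  rw [dist_eq_norm] at hwu
  refine ⟨u, d, hu.hasFDerivAt, ?_⟩
  linarith [(abs_le.1 hdwu).1, norm_sub_norm_le w u]

theorem FiniteDimensional.exists_inclusionInDoubleDual_eq [FiniteDimensional ℝ E]
    (L : StrongDual ℝ (StrongDual ℝ E)) : ∃ w : E, NormedSpace.inclusionInDoubleDual ℝ E w = L := by
  refine ⟨(Module.evalEquiv ℝ E).symm
    (L.toLinearMap ∘ₗ LinearMap.toContinuousLinearMap.toLinearMap), ?_⟩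
  ext d
  change (d : E →ₗ[ℝ] ℝ) _ = _
  rw [Module.apply_evalEquiv_symm_apply]
  rfl

theorem closedBall_subset_closure_convexHull_fderiv_norm [FiniteDimensional ℝ E] :
    closedBall (0 : StrongDual ℝ E) 1 ⊆
      closure (convexHull ℝ {d | ∃ u, HasFDerivAt (‖·‖) d u}) := by
  intro x hx
  by_contra hx'
  obtain ⟨L, s, hLs, hLx⟩ :=
    geometric_hahn_banach_closed_point (convex_convexHull ℝ _).closure isClosed_closure hx'
  obtain ⟨w, rfl⟩ := FiniteDimensional.exists_inclusionInDoubleDual_eq L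
  have hws : ‖w‖ ≤ s := by
    refine le_of_forall_pos_lt_add fun δ hδ => ?_
    obtain ⟨u, d, hd, hdw⟩ := exists_hasFDerivAt_norm_sub_lt_apply w hδ
    have := hLs d (subset_closure (subset_convexHull ℝ _ ⟨u, hd⟩))
    rw [NormedSpace.dual_def] at this
    linarith
  have hxw : x w ≤ ‖w‖ := by
    simpa using (le_abs_self _).trans (x.le_of_opNorm_le (mem_closedBall_zero_iff.1 hx) w)
  rw [NormedSpace.dual_def] at hLx
  linarith

end NormDerivative

structure IsStandardEpsIsometry {X Y : Type*} [NormedAddCommGroup X] [NormedAddCommGroup Y]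
    (ε : ℝ) (f : X → Y) : Prop where
  map_zero : f 0 = 0
  abs_norm_sub_sub_norm_sub_le : ∀ x y, |‖f x - f y‖ - ‖x - y‖| ≤ ε

namespace IsStandardEpsIsometry

variable {X Y : Type*} [NormedAddCommGroup X] [NormedAddCommGroup Y] {ε : ℝ} {f : X → Y}

theorem nonneg (hf : IsStandardEpsIsometry ε f) : 0 ≤ ε :=
  (abs_nonneg _).trans (hf.abs_norm_sub_sub_norm_sub_le 0 0)

theorem norm_sub_le (hf : IsStandardEpsIsometry ε f) (x y : X) :
    ‖f x - f y‖ ≤ ‖x - y‖ + ε := by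
  linarith [(abs_le.1 (hf.abs_norm_sub_sub_norm_sub_le x y)).2]

theorem le_norm_sub (hf : IsStandardEpsIsometry ε f) (x y : X) :
    ‖x - y‖ - ε ≤ ‖f x - f y‖ := by
  linarith [(abs_le.1 (hf.abs_norm_sub_sub_norm_sub_le x y)).1]

theorem norm_le (hf : IsStandardEpsIsometry ε f) (x : X) : ‖f x‖ ≤ ‖x‖ + ε := by
  simpa [hf.map_zero] using hf.norm_sub_le x 0

variable [NormedSpace ℝ X]

theorem comp_subtype (hf : IsStandardEpsIsometry ε f) (E : Submodule ℝ X) :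
    IsStandardEpsIsometry ε (f ∘ E.subtype) where
  map_zero := hf.map_zero
  abs_norm_sub_sub_norm_sub_le x y := hf.abs_norm_sub_sub_norm_sub_le x y

variable [NormedSpace ℝ Y]

theorem exists_dual_bracket (hf : IsStandardEpsIsometry ε f) (v : X) :
    ∃ ψ : StrongDual ℝ Y, ‖ψ‖ ≤ 1 ∧
      ∀ x, ‖v‖ - ‖v - x‖ - 3 * ε ≤ ψ (f x) ∧ ψ (f x) ≤ ‖v + x‖ - ‖v‖ + 3 * ε := by
  obtain ⟨ψ, hψ1, hψv⟩ := exists_dual_vector'' ℝ (f v - f (-v))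
  have hψ : ∀ y, |ψ y| ≤ ‖y‖ := fun y => by simpa using ψ.le_of_opNorm_le hψ1 y
  have hspread : 2 * ‖v‖ - ε ≤ ψ (f v) - ψ (f (-v)) := by
    have := hf.le_norm_sub v (-v)
    rw [sub_neg_eq_add, ← two_smul ℝ, norm_smul, Real.norm_two] at this
    rw [← map_sub, hψv]
    exact this
  have hfv : ψ (f v) ≤ ‖v‖ + ε := (abs_le.1 (hψ (f v))).2.trans (hf.norm_le v)
  have hfnv : -(‖v‖ + ε) ≤ ψ (f (-v)) :=
    (neg_le_neg (by simpa using hf.norm_le (-v))).trans (abs_le.1 (hψ (f (-v)))).1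
  refine ⟨ψ, hψ1, fun x => ⟨?_, ?_⟩⟩
  · have h := (le_abs_self _).trans ((hψ _).trans (hf.norm_sub_le v x))
    rw [map_sub] at h
    linarith
  · have h := (le_abs_self _).trans ((hψ _).trans (hf.norm_sub_le x (-v)))
    rw [map_sub, sub_neg_eq_add, add_comm x v] at h
    linarith

theorem exists_dual_near_fderiv_norm (hf : IsStandardEpsIsometry ε f) {ι : Type*} [Finite ι]
    (x : ι → X) {u : X} {d : StrongDual ℝ X} (hd : HasFDerivAt (‖·‖) d u) {δ : ℝ}
    (hδ : 0 < δ) :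
    ∃ ψ : StrongDual ℝ Y, ‖ψ‖ ≤ 1 ∧ ∀ i, |ψ (f (x i)) - d (x i)| ≤ 3 * ε + δ := by
  have hfar : ∀ᶠ t : ℝ in atTop, ∀ i,
      ‖t • u + x i‖ - ‖t • u‖ < d (x i) + δ ∧ d (x i) - δ < ‖t • u‖ - ‖t • u - x i‖ := by
    refine eventually_all.2 fun i => ?_
    have hleft : Tendsto (fun t : ℝ => ‖t • u‖ - ‖t • u - x i‖) atTop (𝓝 (d (x i))) := by
      simpa [sub_eq_add_neg] using (hd.tendsto_norm_smul_add_sub_norm_smul (-x i)).neg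
    have hright := hd.tendsto_norm_smul_add_sub_norm_smul (x i)
    exact (hright.eventually (gt_mem_nhds (by linarith))).and
      (hleft.eventually (lt_mem_nhds (by linarith)))
  obtain ⟨t, ht⟩ := hfar.exists
  obtain ⟨ψ, hψ1, hψ⟩ := hf.exists_dual_bracket (t • u)
  refine ⟨ψ, hψ1, fun i => abs_le.2 ⟨?_, ?_⟩⟩ <;> linarith [ht i, hψ (x i)]

theorem exists_dual_abs_sub_le_of_finiteDimensional [FiniteDimensional ℝ X]
    (hf : IsStandardEpsIsometry ε f) {ι : Type*} [Fintype ι] (x : ι → X) {x' : StrongDual ℝ X}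
    (hx' : ‖x'‖ ≤ 1) :
    ∃ ψ : StrongDual ℝ Y, ‖ψ‖ ≤ 1 ∧ ∀ i, |ψ (f (x i)) - x' (x i)| ≤ 3 * ε := by
  let T : StrongDual ℝ Y →L[ℝ] ι → ℝ :=
    ContinuousLinearMap.pi fun i => ContinuousLinearMap.apply ℝ ℝ (f (x i))
  let R : StrongDual ℝ X →L[ℝ] ι → ℝ :=
    ContinuousLinearMap.pi fun i => ContinuousLinearMap.apply ℝ ℝ (x i)
  have h3ε : 0 ≤ 3 * ε := by linarith [hf.nonneg]
  have hcompact : IsCompact (T '' closedBall 0 1) := by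
    rw [← WeakDual.toStrongDual.surjective.image_preimage (closedBall 0 1), ← image_comp]
    exact (WeakDual.isCompact_closedBall 0 1).image
      (continuous_pi fun i => WeakDual.eval_continuous _)
  have hD : {d | ∃ u, HasFDerivAt (‖·‖) d u} ⊆
      R ⁻¹' cthickening (3 * ε) (T '' closedBall 0 1) := by
    rintro d ⟨u, hd⟩
    rw [mem_preimage, cthickening_eq_iInter_cthickening, mem_iInter₂]
    intro η hη
    obtain ⟨ψ, hψ1, hψ⟩ := hf.exists_dual_near_fderiv_norm x hd (sub_pos.2 hη)
    refine mem_cthickening_of_dist_le _ (T ψ) _ _ (mem_image_of_mem T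
      (mem_closedBall_zero_iff.2 hψ1)) ((dist_pi_le_iff (by linarith)).2 fun i => ?_)
    rw [Real.dist_eq, abs_sub_comm]
    simpa [T, R] using hψ i
  have hR : R x' ∈ cthickening (3 * ε) (T '' closedBall 0 1) :=
    have hconvex : Convex ℝ (R ⁻¹' cthickening (3 * ε) (T '' closedBall 0 1)) :=
      (((convex_closedBall 0 1).linear_image T.toLinearMap).cthickening _).linear_preimage
        R.toLinearMap
    closure_minimal (convexHull_min hD hconvex) (isClosed_cthickening.preimage R.continuous)
      (closedBall_subset_closure_convexHull_fderiv_norm (mem_closedBall_zero_iff.2 hx'))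
  rw [hcompact.cthickening_eq_biUnion_closedBall h3ε, mem_iUnion₂] at hR
  obtain ⟨_, ⟨ψ, hψ1, rfl⟩, hdist⟩ := hR
  refine ⟨ψ, mem_closedBall_zero_iff.1 hψ1, fun i => ?_⟩
  rw [mem_closedBall, dist_pi_le_iff h3ε] at hdist
  simpa [T, R, Real.dist_eq, abs_sub_comm] using hdist i

theorem exists_dual_abs_sub_le (hf : IsStandardEpsIsometry ε f) {x' : StrongDual ℝ X}
    (hx' : ‖x'‖ ≤ 1) : ∃ φ : StrongDual ℝ Y, ‖φ‖ ≤ 1 ∧ ∀ x, |φ (f x) - x' x| ≤ 3 * ε := by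
  let C : X → Set (WeakDual ℝ Y) := fun x => {ψ | |ψ (f x) - x' x| ≤ 3 * ε}
  have hC : ∀ x, IsClosed (C x) := fun x =>
    isClosed_le ((WeakDual.eval_continuous _).sub continuous_const).abs continuous_const
  have hfin : ∀ s : Finset X,
      (WeakDual.toStrongDual ⁻¹' closedBall 0 1 ∩ ⋂ x ∈ s, C x).Nonempty := by
    intro s
    let E := Submodule.span ℝ (s : Set X)
    have hx'E : ‖x'.comp E.subtypeL‖ ≤ 1 :=
      (x'.opNorm_comp_le _).trans
        (by simpa using mul_le_one₀ hx' (norm_nonneg _) (Submodule.norm_subtypeL_le E))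
    obtain ⟨ψ, hψ1, hψ⟩ := (hf.comp_subtype E).exists_dual_abs_sub_le_of_finiteDimensional
      (fun i : s => (⟨i, Submodule.subset_span i.2⟩ : E)) hx'E
    exact ⟨StrongDual.toWeakDual ψ, mem_closedBall_zero_iff.2 hψ1,
      mem_iInter₂.2 fun x hx => hψ ⟨x, hx⟩⟩
  obtain ⟨φ, hφ1, hφ⟩ := (WeakDual.isCompact_closedBall 0 1).inter_iInter_nonempty C hC hfin
  exact ⟨WeakDual.toStrongDual φ, mem_closedBall_zero_iff.1 hφ1, fun x => mem_iInter.1 hφ x⟩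

theorem norm_le_of_abs_sub_le (hf : IsStandardEpsIsometry ε f) {φ : StrongDual ℝ Y}
    {x' : StrongDual ℝ X} {C : ℝ} (h : ∀ x, |φ (f x) - x' x| ≤ C) : ‖x'‖ ≤ ‖φ‖ := by
  refine x'.opNorm_le_bound (norm_nonneg φ) fun x => ?_
  have hscaled : ∀ t > 0, ‖x' x‖ ≤ ‖φ‖ * ‖x‖ + (‖φ‖ * ε + C) * t⁻¹ := by
    intro t ht
    have h1 : |x' (t • x)| ≤ |φ (f (t • x))| + C := by
      have := abs_sub_abs_le_abs_sub (x' (t • x)) (φ (f (t • x)))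
      rw [abs_sub_comm] at this
      linarith [h (t • x)]
    have h2 : |φ (f (t • x))| ≤ ‖φ‖ * (t * ‖x‖ + ε) := by
      have := (φ.le_opNorm _).trans
        (mul_le_mul_of_nonneg_left (hf.norm_le (t • x)) (norm_nonneg φ))
      simpa [norm_smul, abs_of_pos ht] using this
    rw [map_smul, smul_eq_mul, abs_mul, abs_of_pos ht] at h1
    rw [Real.norm_eq_abs, ← sub_le_iff_le_add', ← div_eq_mul_inv, le_div_iff₀' ht]
    nlinarith
  refine ge_of_tendsto ?_ ((eventually_gt_atTop 0).mono hscaled)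
  simpa using (tendsto_inv_atTop_zero.const_mul (‖φ‖ * ε + C)).const_add (‖φ‖ * ‖x‖)

theorem exists_dual_norm_eq_abs_sub_le (hf : IsStandardEpsIsometry ε f) (x' : StrongDual ℝ X) :
    ∃ φ : StrongDual ℝ Y, ‖φ‖ = ‖x'‖ ∧ ∀ x, |φ (f x) - x' x| ≤ 3 * ε * ‖x'‖ := by
  rcases eq_or_ne x' 0 with rfl | hx'
  · exact ⟨0, by simp, fun x => by simp⟩
  have hr : 0 < ‖x'‖ := norm_pos_iff.2 hx'
  obtain ⟨φ, hφ1, hφ⟩ := hf.exists_dual_abs_sub_le (x' := ‖x'‖⁻¹ • x')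
    (by rw [norm_smul, norm_inv, norm_norm, inv_mul_cancel₀ hr.ne'])
  have hφ_norm : ‖φ‖ = 1 := le_antisymm hφ1 <| by
    simpa [norm_smul, hr.ne'] using hf.norm_le_of_abs_sub_le hφ
  refine ⟨‖x'‖ • φ, by rw [norm_smul, norm_norm, hφ_norm, mul_one], fun x => ?_⟩
  have hx : x' x = ‖x'‖ * (‖x'‖⁻¹ • x') x := by simp [hr.ne']
  rw [smul_apply, smul_eq_mul, hx, ← mul_sub, abs_mul, abs_norm, mul_comm]
  exact mul_le_mul_of_nonneg_right (hφ x) hr.le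

end IsStandardEpsIsometry

theorem stmt0_general (X Y : Type) [NormedAddCommGroup X] [NormedSpace ℝ X]
    [NormedAddCommGroup Y] [NormedSpace ℝ Y]
    (ε : ℝ) (hε : 0 ≤ ε) (f : X → Y) (hf0 : f 0 = 0)
    (hf : ∀ x y : X, |‖f x - f y‖ - ‖x - y‖| ≤ ε)
    (x' : StrongDual ℝ X) :
    ∃ φ : StrongDual ℝ Y, ‖φ‖ = ‖x'‖ ∧ ∀ x : X, |φ (f x) - x' x| ≤ 4 * ε * ‖x'‖ := by
  obtain ⟨φ, hφ_norm, hφ⟩ := IsStandardEpsIsometry.exists_dual_norm_eq_abs_sub_le ⟨hf0, hf⟩ x'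
  exact ⟨φ, hφ_norm, fun x => (hφ x).trans
    (mul_le_mul_of_nonneg_right (by linarith) (norm_nonneg x'))⟩

/-- **Cheng–Dong–Zhang theorem.** If `f : X → Y` is a standard `ε`-isometry between
real Banach spaces, then for every `x* ∈ X*` there exists `φ ∈ Y*` with `‖φ‖ = ‖x*‖`
such that `|⟨φ, f x⟩ - ⟨x*, x⟩| ≤ 4 ε ‖x*‖` for all `x ∈ X`. -/
theorem stmt0 (X Y : Type) [NormedAddCommGroup X] [NormedSpace ℝ X] [CompleteSpace X]
    [NormedAddCommGroup Y] [NormedSpace ℝ Y] [CompleteSpace Y]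
    (ε : ℝ) (hε : 0 ≤ ε) (f : X → Y) (hf0 : f 0 = 0)
    (hf : ∀ x y : X, |‖f x - f y‖ - ‖x - y‖| ≤ ε)
    (x' : StrongDual ℝ X) :
    ∃ φ : StrongDual ℝ Y, ‖φ‖ = ‖x'‖ ∧ ∀ x : X, |φ (f x) - x' x| ≤ 4 * ε * ‖x'‖ :=
  stmt0_general X Y ε hε f hf0 hf x'
end

section
/- For every infinite-dimensional real Banach space X, the cardinality of X equals dens(X)^ℵ0, where dens(X) is the density character of X (the smallest cardinality of a dense subset). -/
/-!
A point of a first-countable Hausdorff space is the limit of a sequence from a dense set,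
which gives `#X ≤ dens X ^ ℵ₀`.

Conversely, take maximal `1/(n+1)`-separated subsets `N n` of the unit ball: their union,
rescaled by natural numbers, is dense. For a fixed sequence of indices `h`, sequences with
`x k ∈ N (h k)` are mapped injectively to `∑ w k • x k` as soon as the weights decay so fast that
the first term where two sequences differ dominates the rest of the series. So there are at most
`𝔠 * #X` sequences in `⋃ n, N n`, and `𝔠 ≤ #X` absorbs all the countable factors.
-/

/-- The density character of a topological space: the least cardinality of a dense subset. -/
noncomputable def densChar (X : Type) [TopologicalSpace X] : Cardinal :=
  sInf {c : Cardinal | ∃ s : Set X, Dense s ∧ Cardinal.mk s = c}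

open Cardinal Set Filter Topology Metric Function
open scoped NNReal ENNReal

section DensityCharacter

variable (X : Type) [TopologicalSpace X]

theorem exists_dense_mk_eq_densChar : ∃ s : Set X, Dense s ∧ #s = densChar X :=
  csInf_mem (s := {c | ∃ s : Set X, Dense s ∧ #s = c}) ⟨_, univ, dense_univ, rfl⟩

variable {X}

theorem densChar_le_mk_of_dense {s : Set X} (hs : Dense s) : densChar X ≤ #s :=
  csInf_le' ⟨s, hs, rfl⟩

theorem densChar_le_mk_of_denseRange {α : Type} {f : α → X} (hf : DenseRange f) :
    densChar X ≤ #α :=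
  (densChar_le_mk_of_dense hf).trans mk_range_le

variable (X)

theorem mk_le_densChar_pow_aleph0 [FirstCountableTopology X] [T2Space X] :
    #X ≤ densChar X ^ ℵ₀ := by
  obtain ⟨s, hs, hcard⟩ := exists_dense_mk_eq_densChar X
  have hseq : ∀ x : X, ∃ u : ℕ → s, Tendsto (fun n ↦ (u n : X)) atTop (𝓝 x) := fun x ↦ by
    obtain ⟨u, hus, hlim⟩ := mem_closure_iff_seq_limit.1 (hs x)
    exact ⟨fun n ↦ ⟨u n, hus n⟩, hlim⟩
  choose u hu using hseq
  have hinj : Injective u := fun x y hxy ↦ tendsto_nhds_unique (hu x) (hxy ▸ hu y)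
  calc #X ≤ #(ℕ → s) := mk_le_of_injective hinj
    _ = densChar X ^ ℵ₀ := by rw [← power_def, mk_nat, hcard]

end DensityCharacter

theorem Metric.exists_isSeparated_isCover {X : Type*} [PseudoEMetricSpace X] (ε : ℝ≥0)
    (s : Set X) : ∃ N ⊆ s, IsSeparated ε N ∧ IsCover ε s N := by
  obtain ⟨N, hN⟩ := zorn_subset {N | N ⊆ s ∧ IsSeparated ε N} fun c hcS hc ↦
    ⟨⋃₀ c, ⟨sUnion_subset fun t ht ↦ (hcS ht).1, (pairwise_sUnion hc.directedOn).2
      fun t ht ↦ (hcS ht).2⟩, fun _ ↦ subset_sUnion_of_mem⟩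
  exact ⟨N, hN.prop.1, hN.prop.2, .of_maximal_isSeparated hN⟩

section Tree

variable {E : Type*} [NormedAddCommGroup E]

theorem tsum_ne_zero_of_tsum_tail_lt_norm [CompleteSpace E] {a : ℕ → E} {b : ℕ → ℝ} {k : ℕ}
    (hab : ∀ j, ‖a j‖ ≤ b j) (hb : Summable b) (hzero : ∀ j < k, a j = 0)
    (htail : ∑' j, b (j + (k + 1)) < ‖a k‖) : ∑' j, a j ≠ 0 := by
  have hsplit : ∑' j, a j = a k + ∑' j, a (j + (k + 1)) := by
    rw [← (hb.of_norm_bounded hab).sum_add_tsum_nat_add (k + 1), Finset.sum_range_succ,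
      Finset.sum_eq_zero fun j hj ↦ hzero j (Finset.mem_range.1 hj), zero_add]
  have hlt : ‖∑' j, a (j + (k + 1))‖ < ‖a k‖ :=
    (tsum_of_norm_bounded ((summable_nat_add_iff (f := b) (k + 1)).2 hb).hasSum
      fun j ↦ hab _).trans_lt htail
  rw [hsplit]
  intro h
  have hnorm_eq := congrArg norm (eq_neg_of_add_eq_zero_left h)
  rw [norm_neg] at hnorm_eq
  exact hlt.ne' hnorm_eq

theorem exists_pos_summable_two_mul_tsum_tail_le {ε : ℕ → ℝ} (hε0 : ∀ k, 0 < ε k)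
    (hε1 : ∀ k, ε k ≤ 1) :
    ∃ w : ℕ → ℝ, (∀ k, 0 < w k) ∧ Summable w ∧
      ∀ k, 2 * ∑' j, w (j + (k + 1)) ≤ w k * ε k := by
  set w : ℕ → ℝ := fun k ↦ ∏ i ∈ Finset.range k, (ε i / 4)
  have hw0 : ∀ k, 0 < w k := fun k ↦ Finset.prod_pos fun i _ ↦ by linarith [hε0 i]
  have hw_succ : ∀ k, w (k + 1) = w k * (ε k / 4) := fun k ↦ Finset.prod_range_succ _ _
  have hw_geom : ∀ k j, w (j + k) ≤ w k * (1 / 4) ^ j := by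
    intro k j
    induction j with
    | zero => simp
    | succ j ih =>
      rw [Nat.add_right_comm, hw_succ, pow_succ, ← mul_assoc]
      exact mul_le_mul ih (by linarith [hε1 (j + k)]) (by linarith [hε0 (j + k)])
        (mul_pos (hw0 k) (by positivity)).le
  have hgeom : Summable fun j : ℕ ↦ (1 / 4 : ℝ) ^ j :=
    summable_geometric_of_lt_one (by norm_num) (by norm_num)
  have hsum : ∀ k, Summable fun j ↦ w (j + k) := fun k ↦
    .of_nonneg_of_le (fun j ↦ (hw0 _).le) (hw_geom k) (hgeom.mul_left _)
  refine ⟨w, hw0, by simpa using hsum 0, fun k ↦ ?_⟩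
  calc 2 * ∑' j, w (j + (k + 1)) ≤ 2 * ∑' j, w (k + 1) * (1 / 4) ^ j :=
        mul_le_mul_of_nonneg_left
          (Summable.tsum_le_tsum (hw_geom _) (hsum _) (hgeom.mul_left _)) zero_le_two
    _ = w k * ε k * (2 / 3) := by
        rw [tsum_mul_left, tsum_geometric_of_lt_one (by norm_num) (by norm_num), hw_succ]
        ring
    _ ≤ w k * ε k := mul_le_of_le_one_right (mul_pos (hw0 k) (hε0 k)).le (by norm_num)

variable [NormedSpace ℝ E] [CompleteSpace E]

theorem injOn_tsum_smul_of_isSeparated {S : ℕ → Set E} {ε : ℕ → ℝ≥0} {w : ℕ → ℝ}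
    (hS : ∀ k, S k ⊆ closedBall 0 1) (hsep : ∀ k, IsSeparated (ε k) (S k))
    (hw0 : ∀ k, 0 < w k) (hw : Summable w)
    (htail : ∀ k, 2 * ∑' j, w (j + (k + 1)) ≤ w k * ε k) :
    InjOn (fun x : ℕ → E ↦ ∑' k, w k • x k) (univ.pi S) := by
  classical
  intro x hx y hy hxy
  have hnorm : ∀ {z : ℕ → E}, z ∈ univ.pi S → ∀ k, ‖z k‖ ≤ 1 := fun hz k ↦
    mem_closedBall_zero_iff.1 (hS k (hz k trivial))
  have hsumm : ∀ {z : ℕ → E}, z ∈ univ.pi S → Summable fun k ↦ w k • z k := fun hz ↦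
    .of_norm_bounded hw fun k ↦ by
      rw [norm_smul, Real.norm_of_nonneg (hw0 k).le]
      exact mul_le_of_le_one_right (hw0 k).le (hnorm hz k)
  by_contra hne
  have hex : ∃ k, x k ≠ y k := Function.ne_iff.1 hne
  set k := Nat.find hex
  set a : ℕ → E := fun j ↦ w j • (x j - y j) with ha
  have hbound : ∀ j, ‖a j‖ ≤ 2 * w j := fun j ↦ by
    rw [ha, norm_smul, Real.norm_of_nonneg (hw0 j).le, mul_comm]
    exact mul_le_mul_of_nonneg_right
      (by linarith [norm_sub_le (x j) (y j), hnorm hx j, hnorm hy j]) (hw0 j).le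
  have hgap : w k * ε k < ‖a k‖ := by
    have h : (ε k : ℝ≥0∞) < edist (x k) (y k) :=
      hsep k (hx k trivial) (hy k trivial) (Nat.find_spec hex)
    rw [edist_nndist, ENNReal.coe_lt_coe, ← NNReal.coe_lt_coe, coe_nndist, dist_eq_norm] at h
    rw [ha, norm_smul, Real.norm_of_nonneg (hw0 k).le]
    exact mul_lt_mul_of_pos_left h (hw0 k)
  refine tsum_ne_zero_of_tsum_tail_lt_norm hbound (hw.mul_left 2)
    (fun j hj ↦ by simp [ha, not_not.1 (Nat.find_min hex hj)])
    (by rw [tsum_mul_left]; exact (htail k).trans_lt hgap) ?_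
  simp only [ha, smul_sub]
  rw [(hsumm hx).tsum_sub (hsumm hy), sub_eq_zero]
  exact hxy

end Tree

section Banach

variable {E : Type*} [NormedAddCommGroup E] [NormedSpace ℝ E]

theorem mk_nat_arrow_iUnion_le_continuum_mul [CompleteSpace E] {N : ℕ → Set E} {ε : ℕ → ℝ≥0}
    (hε0 : ∀ n, 0 < ε n) (hε1 : ∀ n, ε n ≤ 1) (hN : ∀ n, N n ⊆ closedBall 0 1)
    (hsep : ∀ n, IsSeparated (ε n) (N n)) :
    #(ℕ → ⋃ n, N n) ≤ 𝔠 * #E := by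
  choose w hw0 hw htail using fun h : ℕ → ℕ ↦
    exists_pos_summable_two_mul_tsum_tail_le (ε := fun k ↦ (ε (h k) : ℝ)) (fun k ↦ hε0 _)
      (fun k ↦ hε1 _)
  choose idx hidx using fun x : ⋃ n, N n ↦ mem_iUnion.1 x.2
  let F : (ℕ → ⋃ n, N n) → (ℕ → ℕ) × E := fun x ↦ (idx ∘ x, ∑' k, w (idx ∘ x) k • (x k : E))
  have hF : Injective F := by
    intro x y hxy
    obtain ⟨hidx_eq, hsum⟩ := Prod.ext_iff.1 hxy
    simp only [F] at hidx_eq hsum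
    rw [hidx_eq] at hsum
    funext k
    refine Subtype.ext (congrFun (injOn_tsum_smul_of_isSeparated (fun k ↦ hN _) (fun k ↦ hsep _)
      (hw0 _) (hw _) (htail _) (fun j _ ↦ ?_) (fun j _ ↦ hidx (y j)) hsum) k)
    have hj : idx (x j) = idx (y j) := congrFun hidx_eq j
    simpa only [hj] using hidx (x j)
  calc #(ℕ → ⋃ n, N n) ≤ #((ℕ → ℕ) × E) := mk_le_of_injective hF
    _ = 𝔠 * #E := by simp [mk_prod, aleph0_power_aleph0]

theorem denseRange_natCast_smul_of_isCover {N : ℕ → Set E} {ε : ℕ → ℝ≥0}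
    (hε : Tendsto ε atTop (𝓝 0)) (hcov : ∀ n, IsCover (ε n) (closedBall 0 1) (N n)) :
    DenseRange fun p : ℕ × ⋃ n, N n ↦ (p.1 : ℝ) • (p.2 : E) := by
  rw [Metric.denseRange_iff]
  intro x r hr
  obtain ⟨m, hm⟩ := exists_nat_ge (max ‖x‖ 1)
  have hm0 : (0 : ℝ) < m := by linarith [le_max_right ‖x‖ 1]
  obtain ⟨n, hn⟩ : ∃ n, (ε n : ℝ) < r / m :=
    ((NNReal.tendsto_coe.2 hε).eventually (gt_mem_nhds (div_pos hr hm0))).exists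
  have hy : (m : ℝ)⁻¹ • x ∈ closedBall (0 : E) 1 := by
    rw [mem_closedBall_zero_iff, norm_smul, norm_inv, Real.norm_natCast, inv_mul_le_one₀ hm0]
    exact (le_max_left _ _).trans hm
  obtain ⟨z, hzN, hz⟩ := mem_iUnion₂.1 ((hcov n).subset_iUnion_closedBall hy)
  refine ⟨(m, ⟨z, mem_iUnion_of_mem n hzN⟩), ?_⟩
  calc dist x ((m : ℝ) • z) = dist ((m : ℝ) • (m : ℝ)⁻¹ • x) ((m : ℝ) • z) := by
        rw [smul_inv_smul₀ hm0.ne']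
    _ = m * dist ((m : ℝ)⁻¹ • x) z := by rw [dist_smul₀, Real.norm_natCast]
    _ ≤ m * ε n := by gcongr; exact hz
    _ < r := by rwa [lt_div_iff₀' hm0] at hn

end Banach

theorem densChar_pow_aleph0_le_mk (E : Type) [NormedAddCommGroup E] [NormedSpace ℝ E]
    [CompleteSpace E] [Nontrivial E] : densChar E ^ ℵ₀ ≤ #E := by
  set ε : ℕ → ℝ≥0 := fun n ↦ 1 / (n + 1)
  choose N hNsub hsep hcov using fun n ↦ exists_isSeparated_isCover (ε n) (closedBall (0 : E) 1)
  have hc : 𝔠 ≤ #E := continuum_le_cardinal_of_module ℝ E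
  calc densChar E ^ ℵ₀ ≤ #(ℕ × ⋃ n, N n) ^ ℵ₀ := power_le_power_right
        (densChar_le_mk_of_denseRange
          (denseRange_natCast_smul_of_isCover tendsto_one_div_add_atTop_nhds_zero_nat hcov))
    _ = 𝔠 * #(ℕ → ⋃ n, N n) := by simp [mk_prod, mul_power, aleph0_power_aleph0]
    _ ≤ 𝔠 * (𝔠 * #E) := by
        gcongr
        exact mk_nat_arrow_iUnion_le_continuum_mul (fun n ↦ by positivity)
          (fun n ↦ by simp [ε]) hNsub hsep
    _ = #E := by
        rw [← mul_assoc, continuum_mul_self,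
          mul_eq_right (aleph0_le_continuum.trans hc) hc continuum_ne_zero]

/-- For every infinite-dimensional real Banach space `X`,
`card X = (dens X) ^ ℵ₀`. -/
theorem stmt5 (X : Type) [NormedAddCommGroup X] [NormedSpace ℝ X] [CompleteSpace X]
    (hinf : ¬ FiniteDimensional ℝ X) :
    Cardinal.mk X = densChar X ^ Cardinal.aleph0 := by
  have : Nontrivial X := by
    by_contra h
    rw [not_nontrivial_iff_subsingleton] at h
    exact hinf inferInstance
  exact (mk_le_densChar_pow_aleph0 X).antisymm (densChar_pow_aleph0_le_mk X)
end

section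
/- If X is λ-separably injective, then X is 3λ-complemented in every Banach superspace Z for which the quotient Z/X is separable: there exists a bounded linear projection P : Z → X with ‖P‖ ≤ 3λ. -/
/-!
Since `Z/X` is separable, lifting a countable dense subgroup of `Z/X` almost isometrically and
closing up (the series argument of `controlled_closure_of_complete`) gives a closed separable
subspace `S` of `Z` such that every `z` splits as `z = x + s` with `x ∈ X`, `s ∈ S` and
`‖s‖ ≤ C‖z‖` for any prescribed `C > 1`. Separable injectivity extends the identity of `X ∩ S`
to `E : S → X` with `‖E‖ ≤ λ`, so `P (x + s) = x + E s` is a well-defined projection, and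
`‖P z‖ ≤ ‖z - s‖ + λ‖s‖ ≤ (1 + (1 + λ) C)‖z‖` gives `‖P‖ ≤ 2 + λ ≤ 3λ`.
-/

/-- A Banach space `Z` is `λ`-separably injective. -/
def IsSepInjective (lam : ℝ) (Z : Type) [NormedAddCommGroup Z] [NormedSpace ℝ Z] : Prop :=
  ∀ (Y : Type) [NormedAddCommGroup Y] [NormedSpace ℝ Y] [CompleteSpace Y]
    [TopologicalSpace.SeparableSpace Y]
    (W : Subspace ℝ Y), IsClosed (W : Set Y) →
    ∀ T : W →L[ℝ] Z, ∃ S : Y →L[ℝ] Z, (∀ w : W, S w = T w) ∧ ‖S‖ ≤ lam * ‖T‖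

open Set TopologicalSpace Filter Topology

theorem exists_countable_dense_addSubgroup (G : Type*) [AddCommGroup G] [TopologicalSpace G]
    [SeparableSpace G] : ∃ K : AddSubgroup G, Countable K ∧ Dense (K : Set G) := by
  obtain ⟨D, hD, hdense⟩ := exists_countable_dense G
  have := hD.to_subtype
  refine ⟨(Submodule.span ℤ (range ((↑) : D → G))).toAddSubgroup, ?_, ?_⟩
  · change Countable (Submodule.span ℤ (range ((↑) : D → G)))
    infer_instance
  · refine hdense.mono ?_
    rw [Subtype.range_coe]
    exact Submodule.subset_span

theorem Submodule.Quotient.exists_mk_eq_norm_le {R M : Type*} [NormedAddCommGroup M] [Ring R]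
    [Module R M] {N : Submodule R M} [IsClosed (N : Set M)] (q : M ⧸ N) {C : ℝ} (hC : 1 < C) :
    ∃ m : M, Submodule.Quotient.mk m = q ∧ ‖m‖ ≤ C * ‖q‖ := by
  rcases eq_or_ne q 0 with rfl | hq
  · exact ⟨0, rfl, by simp⟩
  obtain ⟨m, rfl, hm⟩ :=
    Submodule.Quotient.norm_mk_lt q (mul_pos (sub_pos.2 hC) (norm_pos_iff.2 hq))
  exact ⟨m, rfl, by linarith⟩

theorem NormedAddGroupHom.surjectiveOnWith_top_of_dense {G H : Type*} [NormedAddCommGroup G]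
    [CompleteSpace G] [NormedAddCommGroup H] {f : NormedAddGroupHom G H}
    {K : AddSubgroup H} (hK : Dense (K : Set H)) (hf : ∀ C > 1, f.SurjectiveOnWith K C)
    {C : ℝ} (hC : 1 < C) : f.SurjectiveOnWith ⊤ C := by
  have h := controlled_closure_of_complete (by linarith : 0 < (1 + C) / 2)
    (by linarith : 0 < (C - 1) / 2) (hf _ (by linarith))
  rwa [show K.topologicalClosure = ⊤ from SetLike.coe_injective hK.closure_eq,
    show (1 + C) / 2 + (C - 1) / 2 = C by ring] at h

theorem exists_separable_supplement_of_separableSpace_quotient {𝕜 Z : Type*} [NormedField 𝕜]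
    [SeparableSpace 𝕜] [NormedAddCommGroup Z] [NormedSpace 𝕜 Z] [CompleteSpace Z] (N : Submodule 𝕜 Z)
    [IsClosed (N : Set Z)] [SeparableSpace (Z ⧸ N)] :
    ∃ S : Submodule 𝕜 Z, IsClosed (S : Set Z) ∧ IsSeparable (S : Set Z) ∧
      ∀ z : Z, ∀ C > 1, ∃ s ∈ S, z - s ∈ N ∧ ‖s‖ ≤ C * ‖z‖ := by
  obtain ⟨K, hKc, hKd⟩ := exists_countable_dense_addSubgroup (Z ⧸ N)
  -- constants `1 + 1 / (m + 1)` for all `m`, so that `S` holds lifts of `K` with any `C > 1`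
  choose g hg using fun (q : Z ⧸ N) (m : ℕ) =>
    Submodule.Quotient.exists_mk_eq_norm_le q (C := 1 + 1 / (m + 1))
      (lt_add_of_pos_right 1 (by positivity))
  set S := (Submodule.span 𝕜 (range fun p : K × ℕ => g p.1 p.2)).topologicalClosure
  have hgS : ∀ q ∈ K, ∀ m, g q m ∈ S := fun q hq m =>
    Submodule.le_topologicalClosure _ (Submodule.subset_span ⟨(⟨q, hq⟩, m), rfl⟩)
  let f : NormedAddGroupHom S (Z ⧸ N) := (N.mkQ ∘ₗ S.subtype).toAddMonoidHom.mkNormedAddGroupHom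
    1 fun s => by simpa using Submodule.Quotient.norm_mk_le N s
  have hfK : ∀ C > 1, f.SurjectiveOnWith K C := by
    intro C hC q hq
    obtain ⟨m, hm⟩ := exists_nat_one_div_lt (sub_pos.2 hC)
    refine ⟨⟨g q m, hgS q hq m⟩, (hg q m).1, (hg q m).2.trans ?_⟩
    gcongr
    linarith
  refine ⟨S, Submodule.isClosed_topologicalClosure _, ?_, fun z C hC => ?_⟩
  · rw [Submodule.topologicalClosure_coe]
    exact (countable_range _).isSeparable.span.closure
  obtain ⟨s, hs, hsn⟩ :=
    NormedAddGroupHom.surjectiveOnWith_top_of_dense hKd hfK hC (Submodule.Quotient.mk z) trivial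
  refine ⟨s, s.2, (Submodule.Quotient.eq N).1 hs.symm, hsn.trans ?_⟩
  gcongr
  exact Submodule.Quotient.norm_mk_le N z

theorem LinearMap.exists_map_add_eq_of_sup_eq_top {R X Z : Type*} [Ring R] [AddCommGroup X]
    [Module R X] [AddCommGroup Z] [Module R Z] {ι : X →ₗ[R] Z} (hι : Function.Injective ι)
    {S : Submodule R Z} (hS : LinearMap.range ι ⊔ S = ⊤) (E : S →ₗ[R] X)
    (hE : ∀ x (s : S), ι x = s → E s = x) :
    ∃ P : Z →ₗ[R] X, ∀ x (s : S), P (ι x + s) = x + E s := by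
  let f : Z →ₗ.[R] X := ⟨LinearMap.range ι, (LinearEquiv.ofInjective ι hι).symm⟩
  let g : Z →ₗ.[R] X := ⟨S, E⟩
  have hfg : ∀ (x : f.domain) (y : g.domain), (x : Z) = y → f x = g y := by
    rintro ⟨_, x, rfl⟩ y hxy
    rw [show g y = x from hE x y hxy]
    exact (LinearEquiv.ofInjective ι hι).symm_apply_apply x
  refine ⟨(f.sup g hfg).toFun ∘ₗ (LinearEquiv.ofTop _ hS).symm.toLinearMap, fun x s => ?_⟩
  exact (LinearPMap.sup_apply hfg ⟨ι x, x, rfl⟩ s _ rfl).trans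
    (congrArg (· + E s) ((LinearEquiv.ofInjective ι hι).symm_apply_apply x))

theorem LinearIsometry.isClosed_range_toLinearMap {𝕜 X Z : Type*} [NormedField 𝕜]
    [NormedAddCommGroup X] [NormedSpace 𝕜 X] [CompleteSpace X] [NormedAddCommGroup Z]
    [NormedSpace 𝕜 Z] (ι : X →ₗᵢ[𝕜] Z) : IsClosed (LinearMap.range ι.toLinearMap : Set Z) := by
  rw [LinearMap.coe_range]
  exact ι.isometry.isClosedEmbedding.isClosed_range

theorem IsSepInjective.exists_extension_of_isometry_inv {lam : ℝ} (hlam : 0 ≤ lam) {X Z : Type}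
    [NormedAddCommGroup X] [NormedSpace ℝ X] [CompleteSpace X] [NormedAddCommGroup Z]
    [NormedSpace ℝ Z] [CompleteSpace Z] (hX : IsSepInjective lam X) (ι : X →ₗᵢ[ℝ] Z)
    {S : Submodule ℝ Z} (hSc : IsClosed (S : Set Z)) (hSs : IsSeparable (S : Set Z)) :
    ∃ E : S →L[ℝ] X, ‖E‖ ≤ lam ∧ ∀ x (s : S), ι x = s → E s = x := by
  have := hSc.completeSpace_coe
  have := hSs.separableSpace
  set N := LinearMap.range ι.toLinearMap
  let W : Submodule ℝ S := N.comap S.subtype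
  let T₀ : W →ₗ[ℝ] X := ι.equivRange.symm.toLinearEquiv.toLinearMap ∘ₗ
    (S.subtype ∘ₗ W.subtype).codRestrict N fun w => w.2
  have hιT₀ : ∀ w, ι (T₀ w) = w := fun w =>
    congrArg Subtype.val (ι.equivRange.apply_symm_apply _)
  have hT₀ : ∀ w, ‖T₀ w‖ ≤ 1 * ‖w‖ := fun w => by
    rw [one_mul, ← ι.norm_map, hιT₀]
    rfl
  obtain ⟨E, hET, hE⟩ := hX S W (ι.isClosed_range_toLinearMap.preimage continuous_subtype_val)
    (T₀.mkContinuous 1 hT₀)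
  refine ⟨E, hE.trans ?_, fun x s hxs => ?_⟩
  · simpa using mul_le_mul_of_nonneg_left (T₀.mkContinuous_norm_le zero_le_one hT₀) hlam
  · have hs : (s : Z) ∈ N := ⟨x, hxs⟩
    refine ι.injective ?_
    rw [hET ⟨s, hs⟩, LinearMap.mkContinuous_apply, hιT₀, hxs]

theorem LinearMap.norm_apply_le_of_map_add_eq {𝕜 X Z : Type*} [NontriviallyNormedField 𝕜]
    [NormedAddCommGroup X] [NormedSpace 𝕜 X] [NormedAddCommGroup Z] [NormedSpace 𝕜 Z]
    (ι : X →ₗᵢ[𝕜] Z) {S : Submodule 𝕜 Z}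
    (hS : ∀ z : Z, ∀ C > 1, ∃ s ∈ S, z - s ∈ LinearMap.range ι.toLinearMap ∧ ‖s‖ ≤ C * ‖z‖)
    (E : S →L[𝕜] X) (P : Z →ₗ[𝕜] X) (hP : ∀ x (s : S), P (ι x + s) = x + E s) (z : Z) :
    ‖P z‖ ≤ (2 + ‖E‖) * ‖z‖ := by
  have hbound : ∀ C > 1, ‖P z‖ ≤ (2 + ‖E‖) * ‖z‖ * C := by
    intro C hC
    obtain ⟨s, hsS, ⟨x, hx⟩, hs⟩ := hS z C hC
    have hz : z = ι x + (⟨s, hsS⟩ : S) := by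
      change z = ι x + s
      rw [← LinearIsometry.coe_toLinearMap, hx]
      abel
    calc ‖P z‖ = ‖x + E ⟨s, hsS⟩‖ := by rw [hz, hP]
      _ ≤ ‖x‖ + ‖E‖ * ‖s‖ := norm_add_le_of_le le_rfl (E.le_opNorm _)
      _ = ‖z - s‖ + ‖E‖ * ‖s‖ := by rw [← ι.norm_map, ← LinearIsometry.coe_toLinearMap, hx]
      _ ≤ ‖z‖ + (1 + ‖E‖) * ‖s‖ := by linarith [norm_sub_le z s]
      _ ≤ ‖z‖ + (1 + ‖E‖) * (C * ‖z‖) := by gcongr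
      _ ≤ (2 + ‖E‖) * ‖z‖ * C := by nlinarith [norm_nonneg z, norm_nonneg E]
  have hlim : Tendsto (fun C => (2 + ‖E‖) * ‖z‖ * C) (𝓝[>] 1) (𝓝 ((2 + ‖E‖) * ‖z‖)) :=
    ((continuous_const_mul _).tendsto' 1 _ (mul_one _)).mono_left nhdsWithin_le_nhds
  exact ge_of_tendsto hlim (eventually_nhdsWithin_of_forall hbound)

/-- If `X` is `λ`-separably injective, then `X` is `3λ`-complemented in every Banach
superspace `Z` with `Z/X` separable. -/
theorem stmt11 (X : Type) [NormedAddCommGroup X] [NormedSpace ℝ X] [CompleteSpace X]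
    (lam : ℝ) (hlam : 1 ≤ lam) (hX : IsSepInjective lam X)
    (Z : Type) [NormedAddCommGroup Z] [NormedSpace ℝ Z] [CompleteSpace Z]
    (ι : X →ₗᵢ[ℝ] Z)
    (hsep : TopologicalSpace.SeparableSpace (Z ⧸ LinearMap.range ι.toLinearMap)) :
    ∃ P : Z →L[ℝ] X, ‖P‖ ≤ 3 * lam ∧ ∀ x : X, P (ι x) = x := by
  have := ι.isClosed_range_toLinearMap
  obtain ⟨S, hSc, hSs, hlift⟩ :=
    exists_separable_supplement_of_separableSpace_quotient (LinearMap.range ι.toLinearMap)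
  obtain ⟨E, hE, hEι⟩ := hX.exists_extension_of_isometry_inv (by linarith) ι hSc hSs
  have hsup : LinearMap.range ι.toLinearMap ⊔ S = ⊤ := eq_top_iff.2 fun z _ => by
    obtain ⟨s, hs, hzs, -⟩ := hlift z 2 one_lt_two
    simpa using Submodule.add_mem_sup hzs hs
  obtain ⟨P, hP⟩ := LinearMap.exists_map_add_eq_of_sup_eq_top ι.injective hsup E hEι
  refine ⟨P.mkContinuous (2 + ‖E‖) (LinearMap.norm_apply_le_of_map_add_eq ι hlift E P hP), ?_,
    fun x => by simpa using hP x 0⟩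
  calc _ ≤ 2 + ‖E‖ := P.mkContinuous_norm_le (by positivity) _
    _ ≤ 3 * lam := by linarith
end

section
/- If a Banach space X is λ-complemented in every superspace Z such that Z/X is separable, then X is λ-separably injective: every bounded linear operator from a closed subspace of a separable Banach space into X extends with norm at most λ times the original. -/
/-!
For `T : W →L[ℝ] X` with `‖T‖ ≤ 1`, form the pushout `Z` of `T` and the inclusion `W ⊆ Y`: the
quotient of the ℓ¹-sum `X ⊕₁ Y` by the closure of `{(T w, -w)}`. In `Z` the images of `w` and
`T w` agree, `Y` maps in with norm at most `1`, and `X` embeds isometrically because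
`‖x - T w‖ + ‖w‖ ≥ ‖x - T w‖ + ‖T w‖ ≥ ‖x‖`. Since every element of `Z` is the sum of an element of
`X` and one of `Y`, the space `Z / X` is a continuous image of `Y`, hence separable. A projection
of `Z` onto `X` of norm at most `λ`, restricted to `Y`, extends `T`; the general case follows by
rescaling `T`.
-/

open WithLp

section Pushout

variable {X Y : Type*} [NormedAddCommGroup X] [NormedSpace ℝ X]
  [NormedAddCommGroup Y] [NormedSpace ℝ Y] {W : Submodule ℝ Y} (T : W →L[ℝ] X)

def pushoutKernel : Submodule ℝ (WithLp 1 (X × Y)) :=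
  (LinearMap.range ((WithLp.linearEquiv 1 ℝ (X × Y)).symm.toLinearMap ∘ₗ
    (T : W →ₗ[ℝ] X).prod (-W.subtype))).topologicalClosure

instance isClosed_pushoutKernel : IsClosed (pushoutKernel T : Set (WithLp 1 (X × Y))) :=
  Submodule.isClosed_topologicalClosure _

abbrev Pushout := WithLp 1 (X × Y) ⧸ pushoutKernel T

lemma toLp_mem_pushoutKernel (w : W) : toLp 1 (T w, -(w : Y)) ∈ pushoutKernel T :=
  Submodule.le_topologicalClosure _ (LinearMap.mem_range_self _ w)

noncomputable def pushoutInl : X →L[ℝ] Pushout T :=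
  (pushoutKernel T).mkQL ∘L (prodContinuousLinearEquiv 1 ℝ X Y).symm.toContinuousLinearMap ∘L
    ContinuousLinearMap.inl ℝ X Y

noncomputable def pushoutInr : Y →L[ℝ] Pushout T :=
  (pushoutKernel T).mkQL ∘L (prodContinuousLinearEquiv 1 ℝ X Y).symm.toContinuousLinearMap ∘L
    ContinuousLinearMap.inr ℝ X Y

lemma pushoutInl_apply (x : X) :
    pushoutInl T x = Submodule.Quotient.mk (toLp 1 (x, (0 : Y))) := rfl

lemma pushoutInr_apply (y : Y) :
    pushoutInr T y = Submodule.Quotient.mk (toLp 1 ((0 : X), y)) := rfl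

lemma pushoutInl_apply_eq_pushoutInr (w : W) : pushoutInl T (T w) = pushoutInr T w := by
  rw [pushoutInl_apply, pushoutInr_apply, Submodule.Quotient.eq]
  convert toLp_mem_pushoutKernel T w using 1
  rw [← toLp_sub]
  simp

lemma exists_pushoutInl_add_pushoutInr (z : Pushout T) :
    ∃ x y, pushoutInl T x + pushoutInr T y = z := by
  obtain ⟨v, rfl⟩ := Submodule.Quotient.mk_surjective _ z
  refine ⟨v.fst, v.snd, ?_⟩
  rw [pushoutInl_apply, pushoutInr_apply, ← Submodule.Quotient.mk_add, ← toLp_add,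
    Prod.mk_add_mk, add_zero, zero_add]
  rfl

lemma norm_pushoutInr_le : ‖pushoutInr T‖ ≤ 1 :=
  ContinuousLinearMap.opNorm_le_bound _ zero_le_one fun y => by
    simpa [pushoutInr_apply] using
      Submodule.Quotient.norm_mk_le (pushoutKernel T) (toLp 1 ((0 : X), y))

lemma norm_le_norm_pushoutInl (hT : ‖T‖ ≤ 1) (x : X) : ‖x‖ ≤ ‖pushoutInl T x‖ := by
  have hnorm : ‖pushoutInl T x‖ = Metric.infDist (toLp 1 (x, (0 : Y))) (pushoutKernel T) :=
    QuotientAddGroup.norm_mk _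
  rw [hnorm, pushoutKernel, Submodule.topologicalClosure_coe, Metric.infDist_closure,
    Metric.le_infDist ⟨0, zero_mem _⟩]
  rintro _ ⟨w, rfl⟩
  have hdist : dist (toLp 1 (x, (0 : Y))) (toLp 1 (T w, -(w : Y))) = ‖x - T w‖ + ‖w‖ := by
    rw [dist_eq_norm, prod_norm_eq_of_L1]
    simp
  calc ‖x‖ ≤ ‖x - T w‖ + ‖T w‖ := by simpa using norm_add_le (x - T w) (T w)
    _ ≤ ‖x - T w‖ + ‖w‖ := by gcongr; simpa using T.le_of_opNorm_le hT w
    _ = _ := hdist.symm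

noncomputable def pushoutInlₗᵢ (hT : ‖T‖ ≤ 1) : X →ₗᵢ[ℝ] Pushout T where
  toLinearMap := pushoutInl T
  norm_map' x := le_antisymm
    (by simpa [pushoutInl_apply] using
      Submodule.Quotient.norm_mk_le (pushoutKernel T) (toLp 1 (x, (0 : Y))))
    (norm_le_norm_pushoutInl T hT x)

lemma separableSpace_quotient_range_pushoutInl [TopologicalSpace.SeparableSpace Y] :
    TopologicalSpace.SeparableSpace
      (Pushout T ⧸ LinearMap.range (pushoutInl T : X →ₗ[ℝ] Pushout T)) := by
  set R := LinearMap.range (pushoutInl T : X →ₗ[ℝ] Pushout T)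
  have hsurj : Function.Surjective (R.mkQL ∘L pushoutInr T) := by
    intro z
    obtain ⟨z, rfl⟩ := R.mkQ_surjective z
    obtain ⟨x, y, rfl⟩ := exists_pushoutInl_add_pushoutInr T z
    refine ⟨y, (Submodule.Quotient.eq R).mpr ⟨-x, ?_⟩⟩
    simp
  exact hsurj.denseRange.separableSpace (R.mkQL ∘L pushoutInr T).continuous

end Pushout

theorem exists_extension_of_norm_le_one {X Y : Type} [NormedAddCommGroup X] [NormedSpace ℝ X]
    [CompleteSpace X] [NormedAddCommGroup Y] [NormedSpace ℝ Y] [CompleteSpace Y]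
    [TopologicalSpace.SeparableSpace Y] {lam : ℝ}
    (hcompl : ∀ (Z : Type) [NormedAddCommGroup Z] [NormedSpace ℝ Z] [CompleteSpace Z]
      (ι : X →ₗᵢ[ℝ] Z),
      TopologicalSpace.SeparableSpace (Z ⧸ LinearMap.range ι.toLinearMap) →
      ∃ P : Z →L[ℝ] X, ‖P‖ ≤ lam ∧ ∀ x : X, P (ι x) = x)
    {W : Submodule ℝ Y} (T : W →L[ℝ] X) (hT : ‖T‖ ≤ 1) :
    ∃ S : Y →L[ℝ] X, (∀ w : W, S w = T w) ∧ ‖S‖ ≤ lam := by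
  obtain ⟨P, hP, hPι⟩ := hcompl (Pushout T) (pushoutInlₗᵢ T hT)
    (separableSpace_quotient_range_pushoutInl T)
  refine ⟨P ∘L pushoutInr T, fun w => ?_, ?_⟩
  · rw [ContinuousLinearMap.comp_apply, ← pushoutInl_apply_eq_pushoutInr]
    exact hPι (T w)
  · calc ‖P ∘L pushoutInr T‖ ≤ ‖P‖ * ‖pushoutInr T‖ := P.opNorm_comp_le _
      _ ≤ lam * 1 := by gcongr; exacts [(norm_nonneg P).trans hP, norm_pushoutInr_le T]
      _ = lam := mul_one lam

theorem stmt12_general (X : Type) [NormedAddCommGroup X] [NormedSpace ℝ X] [CompleteSpace X]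
    (lam : ℝ)
    (hcompl : ∀ (Z : Type) [NormedAddCommGroup Z] [NormedSpace ℝ Z] [CompleteSpace Z]
      (ι : X →ₗᵢ[ℝ] Z),
      TopologicalSpace.SeparableSpace (Z ⧸ LinearMap.range ι.toLinearMap) →
      ∃ P : Z →L[ℝ] X, ‖P‖ ≤ lam ∧ ∀ x : X, P (ι x) = x) :
    ∀ (Y : Type) [NormedAddCommGroup Y] [NormedSpace ℝ Y] [CompleteSpace Y]
      [TopologicalSpace.SeparableSpace Y]
      (W : Subspace ℝ Y), IsClosed (W : Set Y) →
      ∀ T : W →L[ℝ] X, ∃ S : Y →L[ℝ] X, (∀ w : W, S w = T w) ∧ ‖S‖ ≤ lam * ‖T‖ := by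
  intro Y _ _ _ _ W _ T
  rcases eq_or_ne T 0 with rfl | hT
  · exact ⟨0, by simp, by simp only [ContinuousLinearMap.opNorm_zero, mul_zero, le_refl]⟩
  have hTpos : 0 < ‖T‖ := (norm_pos_iff (E := W →L[ℝ] X)).mpr hT
  obtain ⟨S, hS, hSnorm⟩ := exists_extension_of_norm_le_one hcompl (‖T‖⁻¹ • T) <| by
    calc ‖‖T‖⁻¹ • T‖ ≤ ‖‖T‖⁻¹‖ * ‖T‖ := ContinuousLinearMap.opNorm_smul_le _ _
      _ = 1 := by rw [norm_inv, Real.norm_of_nonneg hTpos.le, inv_mul_cancel₀ hTpos.ne']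
  refine ⟨‖T‖ • S, fun w => by simp [hS, hTpos.ne'], ?_⟩
  calc ‖‖T‖ • S‖ ≤ ‖‖T‖‖ * ‖S‖ := ContinuousLinearMap.opNorm_smul_le _ _
    _ = ‖T‖ * ‖S‖ := by rw [Real.norm_of_nonneg hTpos.le]
    _ ≤ ‖T‖ * lam := by gcongr
    _ = lam * ‖T‖ := mul_comm _ _

/-- If a Banach space `X` is `λ`-complemented in every Banach superspace `Z` with `Z/X`
separable, then `X` is `λ`-separably injective: every bounded linear operator from a
closed subspace of a separable Banach space into `X` extends with norm at most `λ`
times the original. -/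
theorem stmt12 (X : Type) [NormedAddCommGroup X] [NormedSpace ℝ X] [CompleteSpace X]
    (lam : ℝ) (hlam : 1 ≤ lam)
    (hcompl : ∀ (Z : Type) [NormedAddCommGroup Z] [NormedSpace ℝ Z] [CompleteSpace Z]
      (ι : X →ₗᵢ[ℝ] Z),
      TopologicalSpace.SeparableSpace (Z ⧸ LinearMap.range ι.toLinearMap) →
      ∃ P : Z →L[ℝ] X, ‖P‖ ≤ lam ∧ ∀ x : X, P (ι x) = x) :
    ∀ (Y : Type) [NormedAddCommGroup Y] [NormedSpace ℝ Y] [CompleteSpace Y]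
      [TopologicalSpace.SeparableSpace Y]
      (W : Subspace ℝ Y), IsClosed (W : Set Y) →
      ∀ T : W →L[ℝ] X, ∃ S : Y →L[ℝ] X, (∀ w : W, S w = T w) ∧ ‖S‖ ≤ lam * ‖T‖ :=
  stmt12_general X lam hcompl
end

section
/- A Banach space X satisfies: every bounded operator into X from a subspace of a normed space of cardinality ≤ card(X) extends with norm at most λ·(original norm) for some uniform λ depending only on X, if and only if X is complemented in every superspace of the same cardinality. -/
/-!
Extension ⇒ complemented: extend the inverse of `ι` from the range of `ι`.

Complemented ⇒ extension: if no uniform constant existed, there would be, for each `n`, an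
operator `Tₙ : Zₙ → X` of norm `≤ 1` on a subspace of some `Yₙ` with `#Yₙ ≤ #X`, admitting no
extension of norm `≤ n`. Glue them all at once: in the `ℓ¹`-sum `X ⊕₁ (⨁ₙ Yₙ)` of finitely
supported families, divide out the closure of the relations `z ∼ Tₙ z`. Since `‖Tₙ‖ ≤ 1` and the
norm is `ℓ¹`, `X` still embeds isometrically, and the amalgam has the cardinality of `X`. A
projection `P` of the amalgam onto `X` then restricts to extensions of every `Tₙ` with norm
`≤ ‖P‖`, independently of `n`.
-/

open Cardinal

universe u

namespace DFinsupp

variable {ι : Type*} {E : ι → Type*}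

section L1Norm

variable [∀ i, NormedAddCommGroup (E i)]

theorem finsum_norm_eq_sum (f : Π₀ i, E i) {s : Finset ι} (hs : ∀ i ∉ s, f i = 0) :
    ∑ᶠ i, ‖f i‖ = ∑ i ∈ s, ‖f i‖ :=
  finsum_eq_sum_of_support_subset _ fun i hi => by_contra fun his => hi (by simp [hs i his])

theorem finsum_norm_eq_sum_support [DecidableEq ι] [∀ i (x : E i), Decidable (x ≠ 0)]
    (f : Π₀ i, E i) :
    ∑ᶠ i, ‖f i‖ = ∑ i ∈ f.support, ‖f i‖ :=
  finsum_norm_eq_sum f fun _ => notMem_support_iff.mp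

noncomputable abbrev l1NormedAddCommGroup : NormedAddCommGroup (Π₀ i, E i) :=
  AddGroupNorm.toNormedAddCommGroup
    { toFun f := ∑ᶠ i, ‖f i‖
      map_zero' := by simp
      add_le' f g := by
        classical
        have hf : ∀ i ∉ f.support ∪ g.support, f i = 0 := fun i hi =>
          notMem_support_iff.mp fun h => hi (Finset.mem_union_left _ h)
        have hg : ∀ i ∉ f.support ∪ g.support, g i = 0 := fun i hi =>
          notMem_support_iff.mp fun h => hi (Finset.mem_union_right _ h)
        rw [finsum_norm_eq_sum (f + g) (s := f.support ∪ g.support) fun i hi => by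
            rw [add_apply, hf i hi, hg i hi, add_zero],
          finsum_norm_eq_sum f hf, finsum_norm_eq_sum g hg, ← Finset.sum_add_distrib]
        exact Finset.sum_le_sum fun i _ => norm_add_le (f i) (g i)
      neg' f := by simp
      eq_zero_of_map_eq_zero' f hf := by
        classical
        rw [finsum_norm_eq_sum_support,
          Finset.sum_eq_zero_iff_of_nonneg fun i _ => norm_nonneg _] at hf
        ext i
        by_cases hi : i ∈ f.support
        · exact norm_eq_zero.mp (hf i hi)
        · exact notMem_support_iff.mp hi }

attribute [local instance] l1NormedAddCommGroup

theorem l1_norm_def (f : Π₀ i, E i) : ‖f‖ = ∑ᶠ i, ‖f i‖ := rfl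

theorem l1_norm_eq_sum (f : Π₀ i, E i) {s : Finset ι} (hs : ∀ i ∉ s, f i = 0) :
    ‖f‖ = ∑ i ∈ s, ‖f i‖ :=
  finsum_norm_eq_sum f hs

theorem l1_norm_eq_sum_support [DecidableEq ι] [∀ i (x : E i), Decidable (x ≠ 0)]
    (f : Π₀ i, E i) : ‖f‖ = ∑ i ∈ f.support, ‖f i‖ :=
  finsum_norm_eq_sum_support f

theorem l1_norm_single [DecidableEq ι] (i : ι) (x : E i) : ‖single i x‖ = ‖x‖ := by
  rw [l1_norm_eq_sum _ (s := {i}) fun j hj => single_eq_of_ne (Finset.notMem_singleton.mp hj),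
    Finset.sum_singleton, single_eq_same]

theorem l1_norm_mapRange {F : ι → Type*} [∀ i, NormedAddCommGroup (F i)]
    (φ : ∀ i, E i → F i) (hφ : ∀ i, φ i 0 = 0) (hnorm : ∀ i x, ‖φ i x‖ = ‖x‖) (f : Π₀ i, E i) :
    ‖mapRange φ hφ f‖ = ‖f‖ := by
  simp only [l1_norm_def, mapRange_apply, hnorm]

end L1Norm

section L1NormedSpace

variable [∀ i, NormedAddCommGroup (E i)] [∀ i, NormedSpace ℝ (E i)]

attribute [local instance] l1NormedAddCommGroup

noncomputable abbrev l1NormedSpace : NormedSpace ℝ (Π₀ i, E i) where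
  norm_smul_le c f := by
    classical
    rw [l1_norm_eq_sum (c • f) (s := f.support) fun i hi => by
        rw [smul_apply, notMem_support_iff.mp hi, smul_zero],
      l1_norm_eq_sum_support f, Finset.mul_sum]
    exact Finset.sum_le_sum fun i _ => norm_smul_le c (f i)

attribute [local instance] l1NormedSpace

theorem norm_lsum_le [DecidableEq ι] {F : Type*} [NormedAddCommGroup F] [NormedSpace ℝ F]
    {T : ∀ i, E i →L[ℝ] F} {C : ℝ} (hT : ∀ i, ‖T i‖ ≤ C) (f : Π₀ i, E i) :
    ‖lsum ℝ (fun i => (T i).toLinearMap) f‖ ≤ C * ‖f‖ := by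
  classical
  rw [lsum_apply_apply, sumAddHom_apply, DFinsupp.sum, l1_norm_eq_sum_support f, Finset.mul_sum]
  refine (norm_sum_le _ _).trans (Finset.sum_le_sum fun i _ => ?_)
  exact (T i).le_of_opNorm_le (hT i) (f i)

end L1NormedSpace

theorem mk_le_max_aleph0_mk_sigma [DecidableEq ι] [∀ i, AddCommMonoid (E i)] :
    #(Π₀ i, E i) ≤ max ℵ₀ #(Σ i, E i) := by
  refine (mk_le_of_surjective (f := fun l : List (Σ i, E i) =>
    (l.map fun p => single p.1 p.2).sum) fun f => ?_).trans (mk_list_le_max _)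
  induction f using DFinsupp.induction with
  | h0 => exact ⟨[], rfl⟩
  | ha i x f _ _ ih =>
    obtain ⟨l, rfl⟩ := ih
    exact ⟨⟨i, x⟩ :: l, by simp⟩

end DFinsupp

attribute [local instance] DFinsupp.l1NormedAddCommGroup DFinsupp.l1NormedSpace

section

variable {ι X : Type u} {Y : ι → Type u} [DecidableEq ι] [NormedAddCommGroup X]
  [NormedSpace ℝ X] [∀ i, NormedAddCommGroup (Y i)] [∀ i, NormedSpace ℝ (Y i)]
  {Z : ∀ i, Submodule ℝ (Y i)} (T : ∀ i, Z i →L[ℝ] X)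

noncomputable def amalgamRelations : (Π₀ i, Z i) →ₗ[ℝ] WithLp 1 (X × Π₀ i, Y i) :=
  (WithLp.linearEquiv 1 ℝ _).symm.toLinearMap ∘ₗ
    (DFinsupp.lsum ℝ (fun i => (T i).toLinearMap)).prod
      (-DFinsupp.mapRange.linearMap fun i => (Z i).subtype)

noncomputable def amalgamKernel : Submodule ℝ (WithLp 1 (X × Π₀ i, Y i)) :=
  (LinearMap.range (amalgamRelations T)).topologicalClosure

instance : IsClosed (amalgamKernel T : Set (WithLp 1 (X × Π₀ i, Y i))) :=
  Submodule.isClosed_topologicalClosure _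

abbrev Amalgam : Type u := WithLp 1 (X × Π₀ i, Y i) ⧸ amalgamKernel T

namespace Amalgam

noncomputable def inl : X →ₗ[ℝ] Amalgam T :=
  (amalgamKernel T).mkQ ∘ₗ (WithLp.linearEquiv 1 ℝ _).symm.toLinearMap ∘ₗ LinearMap.inl ℝ _ _

noncomputable def inr (i : ι) : Y i →ₗ[ℝ] Amalgam T :=
  (amalgamKernel T).mkQ ∘ₗ (WithLp.linearEquiv 1 ℝ _).symm.toLinearMap ∘ₗ LinearMap.inr ℝ _ _ ∘ₗ
    DFinsupp.lsingle i

theorem inr_coe (i : ι) (z : Z i) : inr T i z = inl T (T i z) := by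
  have h : inl T (T i z) - inr T i z =
      (amalgamKernel T).mkQ (amalgamRelations T (DFinsupp.single i z)) := by
    simp [inl, inr, amalgamRelations, ← Submodule.Quotient.mk_sub, ← WithLp.toLp_sub]
  rw [eq_comm, ← sub_eq_zero, h, Submodule.mkQ_apply, Submodule.Quotient.mk_eq_zero]
  exact Submodule.le_topologicalClosure _ (LinearMap.mem_range_self _ _)

theorem norm_inr_le (i : ι) (y : Y i) : ‖inr T i y‖ ≤ ‖y‖ := by
  refine (Submodule.Quotient.norm_mk_le _ _).trans_eq ?_
  simp [DFinsupp.l1_norm_single]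

theorem norm_le_norm_sub_amalgamRelations (hT : ∀ i, ‖T i‖ ≤ 1) (x : X) (g : Π₀ i, Z i) :
    ‖x‖ ≤ ‖WithLp.toLp 1 (x, 0) - amalgamRelations T g‖ := by
  set c := DFinsupp.lsum ℝ (fun i => (T i).toLinearMap) g
  have hc : ‖c‖ ≤ ‖g‖ := (DFinsupp.norm_lsum_le hT g).trans_eq (one_mul _)
  have hg : ‖DFinsupp.mapRange (fun i (z : Z i) => (z : Y i)) (fun _ => rfl) g‖ = ‖g‖ :=
    DFinsupp.l1_norm_mapRange _ (fun _ => rfl) (fun _ _ => rfl) g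
  calc ‖x‖ ≤ ‖x - c‖ + ‖c‖ := norm_le_norm_sub_add x c
    _ ≤ ‖x - c‖ + ‖g‖ := by gcongr
    _ = ‖WithLp.toLp 1 (x, 0) - amalgamRelations T g‖ := by
      simp [amalgamRelations, WithLp.prod_norm_eq_of_L1, hg, c]

theorem norm_inl (hT : ∀ i, ‖T i‖ ≤ 1) (x : X) : ‖inl T x‖ = ‖x‖ := by
  refine le_antisymm ((Submodule.Quotient.norm_mk_le _ _).trans_eq (by simp)) ?_
  have hdist : ‖inl T x‖ = Metric.infDist (WithLp.toLp 1 (x, (0 : Π₀ i, Y i)))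
      (LinearMap.range (amalgamRelations T)) := by
    rw [← Metric.infDist_closure, ← Submodule.topologicalClosure_coe]
    exact QuotientAddGroup.norm_mk _
  rw [hdist, Metric.le_infDist ⟨0, zero_mem _⟩]
  rintro _ ⟨g, rfl⟩
  exact (norm_le_norm_sub_amalgamRelations T hT x g).trans_eq (dist_eq_norm _ _).symm

noncomputable def inlₗᵢ (hT : ∀ i, ‖T i‖ ≤ 1) : X →ₗᵢ[ℝ] Amalgam T :=
  ⟨inl T, norm_inl T hT⟩

noncomputable def inrL (i : ι) : Y i →L[ℝ] Amalgam T :=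
  (inr T i).mkContinuous 1 fun y => (norm_inr_le T i y).trans_eq (one_mul _).symm

theorem norm_inrL_le (i : ι) : ‖inrL T i‖ ≤ 1 :=
  LinearMap.mkContinuous_norm_le _ zero_le_one _

theorem mk_le [Countable ι] [Infinite X] (hY : ∀ i, #(Y i) ≤ #X) : #(Amalgam T) ≤ #X := by
  have hsigma : #(Σ i, Y i) ≤ #X :=
    calc #(Σ i, Y i) ≤ sum fun _ : ι => #X := (mk_sigma _).trans_le (sum_le_sum _ _ hY)
      _ = #ι * #X := sum_const' _ _
      _ ≤ #X * #X := by gcongr; exact mk_le_aleph0.trans (aleph0_le_mk X)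
      _ = #X := mul_eq_self (aleph0_le_mk X)
  have hsum : #(Π₀ i, Y i) ≤ #X :=
    DFinsupp.mk_le_max_aleph0_mk_sigma.trans (max_le (aleph0_le_mk X) hsigma)
  calc #(Amalgam T) ≤ #(WithLp 1 (X × Π₀ i, Y i)) :=
        mk_le_of_surjective (Submodule.Quotient.mk_surjective _)
    _ = #X * #(Π₀ i, Y i) := by rw [(WithLp.equiv 1 _).cardinal_eq, mk_prod, lift_id, lift_id]
    _ ≤ #X * #X := by gcongr
    _ = #X := mul_eq_self (aleph0_le_mk X)

theorem mk_eq [Countable ι] [Infinite X] (hT : ∀ i, ‖T i‖ ≤ 1) (hY : ∀ i, #(Y i) ≤ #X) :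
    #(Amalgam T) = #X :=
  (mk_le T hY).antisymm (mk_le_of_injective (inlₗᵢ T hT).injective)

end Amalgam

end

section Extension

variable {X Y : Type*} [NormedAddCommGroup X] [NormedSpace ℝ X] [NormedAddCommGroup Y]
  [NormedSpace ℝ Y]

theorem exists_extension_norm_le_mul {Z : Submodule ℝ Y} {C : ℝ}
    (h : ∀ T : Z →L[ℝ] X, ‖T‖ ≤ 1 → ∃ S : Y →L[ℝ] X, (∀ z : Z, S z = T z) ∧ ‖S‖ ≤ C)
    (T : Z →L[ℝ] X) : ∃ S : Y →L[ℝ] X, (∀ z : Z, S z = T z) ∧ ‖S‖ ≤ C * ‖T‖ := by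
  rcases eq_or_ne T 0 with rfl | hT
  · exact ⟨0, fun _ => rfl, by simp [ContinuousLinearMap.opNorm_zero]⟩
  have hpos : 0 < ‖T‖ := (norm_nonneg T).lt_of_ne' (mt T.opNorm_zero_iff.mp hT)
  obtain ⟨S, hS, hSC⟩ := h (‖T‖⁻¹ • T) ((T.opNorm_smul_le ‖T‖⁻¹).trans_eq (by
    rw [norm_inv, Real.norm_of_nonneg hpos.le, inv_mul_cancel₀ hpos.ne']))
  refine ⟨‖T‖ • S, fun z => by simp [hS, smul_smul, mul_inv_cancel₀ hpos.ne'], ?_⟩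
  calc ‖‖T‖ • S‖ ≤ ‖T‖ * ‖S‖ :=
        (S.opNorm_smul_le ‖T‖).trans_eq (by rw [Real.norm_of_nonneg hpos.le])
    _ ≤ ‖T‖ * C := by gcongr
    _ = C * ‖T‖ := mul_comm _ _

theorem LinearIsometry.exists_leftInverse_of_extend (ι : X →ₗᵢ[ℝ] Y)
    (h : ∀ T : LinearMap.range ι.toLinearMap →L[ℝ] X,
      ∃ S : Y →L[ℝ] X, ∀ z : LinearMap.range ι.toLinearMap, S z = T z) :
    ∃ P : Y →L[ℝ] X, ∀ x : X, P (ι x) = x := by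
  obtain ⟨P, hP⟩ := h ι.equivRange.symm.toLinearIsometry.toContinuousLinearMap
  refine ⟨P, fun x => ?_⟩
  rw [show ι x = (ι.equivRange x : Y) from rfl, hP]
  exact ι.equivRange.symm_apply_apply x

end Extension

def CardinalityInjective (X : Type) [NormedAddCommGroup X] [NormedSpace ℝ X] : Prop :=
  ∀ (Y : Type) [NormedAddCommGroup Y] [NormedSpace ℝ Y] (ι : X →ₗᵢ[ℝ] Y),
    #Y = #X → ∃ P : Y →L[ℝ] X, ∀ x : X, P (ι x) = x

section CardinalityInjective

variable {X : Type} [NormedAddCommGroup X] [NormedSpace ℝ X]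

theorem CardinalityInjective.exists_bounded_extensions_of_countable [Infinite X]
    (hX : CardinalityInjective X) {ι : Type} [Countable ι] {Y : ι → Type}
    [∀ i, NormedAddCommGroup (Y i)] [∀ i, NormedSpace ℝ (Y i)] {Z : ∀ i, Submodule ℝ (Y i)}
    (T : ∀ i, Z i →L[ℝ] X) (hT : ∀ i, ‖T i‖ ≤ 1) (hY : ∀ i, #(Y i) ≤ #X) :
    ∃ C, ∀ i, ∃ S : Y i →L[ℝ] X, (∀ z : Z i, S z = T i z) ∧ ‖S‖ ≤ C := by
  classical
  obtain ⟨P, hP⟩ := hX (Amalgam T) (Amalgam.inlₗᵢ T hT) (Amalgam.mk_eq T hT hY)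
  refine ⟨‖P‖, fun i => ⟨P.comp (Amalgam.inrL T i), fun z => ?_, ?_⟩⟩
  · exact (congrArg P (Amalgam.inr_coe T i z)).trans (hP (T i z))
  · calc ‖P.comp (Amalgam.inrL T i)‖ ≤ ‖P‖ * ‖Amalgam.inrL T i‖ := P.opNorm_comp_le _
      _ ≤ ‖P‖ * 1 := by gcongr; exact Amalgam.norm_inrL_le T i
      _ = ‖P‖ := mul_one _

theorem CardinalityInjective.exists_uniform_extension_bound (hX : CardinalityInjective X) :
    ∃ C, ∀ (Y : Type) [NormedAddCommGroup Y] [NormedSpace ℝ Y], #Y ≤ #X →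
      ∀ (Z : Subspace ℝ Y) (T : Z →L[ℝ] X), ‖T‖ ≤ 1 →
        ∃ S : Y →L[ℝ] X, (∀ z : Z, S z = T z) ∧ ‖S‖ ≤ C := by
  rcases subsingleton_or_nontrivial X with _ | _
  · exact ⟨0, fun Y _ _ _ Z T _ => ⟨0, fun _ => Subsingleton.elim _ _, norm_zero.le⟩⟩
  obtain ⟨x, hx⟩ := exists_ne (0 : X)
  have : Infinite X := Infinite.of_injective _ (smul_left_injective ℝ hx)
  by_contra! h
  choose Y _ _ hY Z T hT hbad using fun n : ℕ => h n
  obtain ⟨C, hC⟩ := hX.exists_bounded_extensions_of_countable T hT hY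
  obtain ⟨n, hn⟩ := exists_nat_ge C
  obtain ⟨S, hS, hSC⟩ := hC n
  exact (hbad n S hS).not_ge (hSC.trans hn)

end CardinalityInjective

theorem stmt14_general (X : Type) [NormedAddCommGroup X] [NormedSpace ℝ X] :
    (∃ lam : ℝ, 0 < lam ∧
      ∀ (Y : Type) [NormedAddCommGroup Y] [NormedSpace ℝ Y],
        Cardinal.mk Y ≤ Cardinal.mk X →
        ∀ (Z : Subspace ℝ Y) (T : Z →L[ℝ] X),
          ∃ S : Y →L[ℝ] X, (∀ z : Z, S z = T z) ∧ ‖S‖ ≤ lam * ‖T‖) ↔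
    (∀ (Y : Type) [NormedAddCommGroup Y] [NormedSpace ℝ Y] (ι : X →ₗᵢ[ℝ] Y),
      Cardinal.mk Y = Cardinal.mk X →
      ∃ P : Y →L[ℝ] X, ∀ x : X, P (ι x) = x) := by
  constructor
  · rintro ⟨lam, -, hext⟩ Y _ _ ι hcard
    exact ι.exists_leftInverse_of_extend fun T =>
      (hext Y hcard.le _ T).imp fun _ hS => hS.1
  · intro hX
    obtain ⟨C, hC⟩ := CardinalityInjective.exists_uniform_extension_bound hX
    refine ⟨max C 1, by positivity, fun Y _ _ hY Z T => ?_⟩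
    refine exists_extension_norm_le_mul (fun T hT => ?_) T
    exact (hC Y hY Z T hT).imp fun _ hS => ⟨hS.1, hS.2.trans (le_max_left _ _)⟩

/-- A Banach space `X` has the uniform extension property for operators from subspaces of
normed spaces of cardinality at most `card X` (with a uniform constant `λ` depending only
on `X`) iff `X` is complemented in every normed superspace of the same cardinality. -/
theorem stmt14 (X : Type) [NormedAddCommGroup X] [NormedSpace ℝ X] [CompleteSpace X] :
    (∃ lam : ℝ, 0 < lam ∧
      ∀ (Y : Type) [NormedAddCommGroup Y] [NormedSpace ℝ Y],
        Cardinal.mk Y ≤ Cardinal.mk X →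
        ∀ (Z : Subspace ℝ Y) (T : Z →L[ℝ] X),
          ∃ S : Y →L[ℝ] X, (∀ z : Z, S z = T z) ∧ ‖S‖ ≤ lam * ‖T‖) ↔
    (∀ (Y : Type) [NormedAddCommGroup Y] [NormedSpace ℝ Y] (ι : X →ₗᵢ[ℝ] Y),
      Cardinal.mk Y = Cardinal.mk X →
      ∃ P : Y →L[ℝ] X, ∀ x : X, P (ι x) = x) :=
  stmt14_general X
end

section
/- If X is a closed uncomplemented subspace of a Banach space Y with card(X) = card(Y), then for every ε > 0 there exists a standard ε-isometry f : X → Y with closed linear span of f(X) equal to Y such that f is not stable: there exists no bounded linear operator T : Y → X and γ > 0 with ‖T(f(x)) − x‖ ≤ γε for all x ∈ X. -/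
open Function Metric Set

/-!
As `#Y ≤ #W`, some injection `j` maps `Y` into the annulus `1 < ‖w‖ < 2` of `W`. Perturb the
inclusion `W ⊆ Y` only on the range of `j`, moving `j y` by `ε / 2` times a point of the unit ball
of `Y` that is a positive multiple of `y`; a perturbation of size `ε / 2` keeps an `ε`-isometry.
The span of the image contains every point off the annulus, hence all of `W` (halve the points
of the annulus), hence every difference `f (j y) - j y`, hence all of `Y`. If `T ∘ f` stayed
within bounded distance of the identity of `W`, so would `T` on `W`; but a linear map at bounded
distance from the identity is the identity, so `T` would be a projection onto `W`.
-/

theorem LinearMap.eq_zero_of_forall_norm_le {E F : Type*} [AddCommGroup E] [Module ℝ E]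
    [NormedAddCommGroup F] [NormedSpace ℝ F] (L : E →ₗ[ℝ] F) {C : ℝ}
    (hC : ∀ x, ‖L x‖ ≤ C) : L = 0 := by
  ext x
  by_contra hx
  have hpos : 0 < ‖L x‖ := norm_pos_iff.2 hx
  obtain ⟨n, hn⟩ := exists_nat_gt (C / ‖L x‖)
  have hnx := hC ((n : ℝ) • x)
  rw [map_smul, norm_smul, Real.norm_natCast] at hnx
  rw [div_lt_iff₀ hpos] at hn
  linarith

theorem abs_norm_sub_sub_norm_sub_le {α E : Type*} [SeminormedAddCommGroup E] {u v : α → E}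
    {δ : ℝ} (h : ∀ a, ‖u a - v a‖ ≤ δ / 2) (a b : α) :
    |‖u a - u b‖ - ‖v a - v b‖| ≤ δ := by
  calc |‖u a - u b‖ - ‖v a - v b‖| ≤ ‖(u a - u b) - (v a - v b)‖ := abs_norm_sub_norm_le _ _
    _ = ‖(u a - v a) - (u b - v b)‖ := by congr 1; abel
    _ ≤ ‖u a - v a‖ + ‖u b - v b‖ := norm_sub_le _ _
    _ ≤ δ := by linarith [h a, h b]

theorem exists_injective_norm_mem_Ioo {α E : Type*} [NormedAddCommGroup E] [NormedSpace ℝ E]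
    [Nontrivial E] {e : α → E} (he : Injective e) :
    ∃ j : α → E, Injective j ∧ ∀ a, ‖j a‖ ∈ Ioo 1 2 := by
  obtain ⟨c, hc⟩ := exists_norm_eq E (by norm_num : (0 : ℝ) ≤ 3 / 2)
  refine ⟨fun a => c + (2⁻¹ : ℝ) • (Homeomorph.unitBall (e a) : E), ?_, fun a => ?_⟩
  · exact (add_right_injective c).comp <| (smul_right_injective E (by norm_num)).comp <|
      Subtype.val_injective.comp <| Homeomorph.unitBall.injective.comp he
  · set b := (2⁻¹ : ℝ) • (Homeomorph.unitBall (e a) : E)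
    have hb : ‖b‖ < 2⁻¹ := by
      rw [norm_smul, Real.norm_of_nonneg (by norm_num)]
      linarith [mem_ball_zero_iff.1 (Homeomorph.unitBall (e a)).2]
    show ‖c + b‖ ∈ Ioo 1 2
    exact ⟨by linarith [norm_sub_le_norm_add c b], by linarith [norm_add_le c b]⟩

theorem ContinuousLinearMap.apply_coe_eq_of_forall_norm_sub_le {Y : Type*}
    [NormedAddCommGroup Y] [NormedSpace ℝ Y] {W : Submodule ℝ Y} (T : Y →L[ℝ] W) {f : W → Y}
    {δ C : ℝ} (hf : ∀ x, ‖f x - x‖ ≤ δ) (hT : ∀ x, ‖T (f x) - x‖ ≤ C) (w : W) : T w = w := by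
  have hbound : ∀ x : W, ‖T x - x‖ ≤ C + ‖T‖ * δ := fun x =>
    calc ‖T x - x‖ = ‖(T (f x) - x) - T (f x - x)‖ := by rw [map_sub]; abel_nf
      _ ≤ ‖T (f x) - x‖ + ‖T (f x - x)‖ := norm_sub_le _ _
      _ ≤ C + ‖T‖ * δ := add_le_add (hT x) (T.le_opNorm_of_le (hf x))
  have hL := ((T : Y →ₗ[ℝ] W) ∘ₗ W.subtype - LinearMap.id).eq_zero_of_forall_norm_le hbound
  simpa [sub_eq_zero] using LinearMap.congr_fun hL w

section PerturbedInclusion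

variable {Y : Type*} [NormedAddCommGroup Y] [NormedSpace ℝ Y] {W : Submodule ℝ Y}
  {j : Y → W} {ε : ℝ}

variable (j ε) in
noncomputable def perturbedInclusion (x : W) : Y :=
  x + extend j (fun y => (ε / 2) • (Homeomorph.unitBall y : Y)) 0 x

theorem perturbedInclusion_of_notMem_range {x : W} (hx : x ∉ range j) :
    perturbedInclusion j ε x = x := by
  simp [perturbedInclusion, extend_apply' _ _ _ hx]

theorem perturbedInclusion_apply (hj : Injective j) (y : Y) :
    perturbedInclusion j ε (j y) = j y + (ε / 2) • (Homeomorph.unitBall y : Y) := by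
  simp [perturbedInclusion, hj.extend_apply]

theorem norm_perturbedInclusion_sub_le (hε : 0 ≤ ε) (x : W) :
    ‖perturbedInclusion j ε x - x‖ ≤ ε / 2 := by
  classical
  rw [perturbedInclusion, add_sub_cancel_left, extend_def]
  split_ifs
  · rw [norm_smul, Real.norm_of_nonneg (by positivity)]
    exact mul_le_of_le_one_right (by positivity)
      (mem_ball_zero_iff.1 (Homeomorph.unitBall _).2).le
  · simpa using (by positivity : 0 ≤ ε / 2)

theorem span_range_perturbedInclusion (hj : Injective j) (hjn : ∀ y, ‖j y‖ ∈ Ioo 1 2)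
    (hε : ε ≠ 0) : Submodule.span ℝ (range (perturbedInclusion j ε)) = ⊤ := by
  set S := Submodule.span ℝ (range (perturbedInclusion j ε))
  have hfS : ∀ x, perturbedInclusion j ε x ∈ S := fun x => Submodule.subset_span ⟨x, rfl⟩
  have hout : ∀ x : W, x ∉ range j → (x : Y) ∈ S := fun x hx => by
    simpa [perturbedInclusion_of_notMem_range hx] using hfS x
  have hW : ∀ x : W, (x : Y) ∈ S := by
    intro x
    by_cases hx : x ∈ range j
    · have hhalf : (2⁻¹ : ℝ) • x ∉ range j := by
        rintro ⟨y, hy⟩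
        obtain ⟨z, rfl⟩ := hx
        have hy' := (hjn y).1
        rw [hy, norm_smul, Real.norm_of_nonneg (by norm_num)] at hy'
        linarith [(hjn z).2]
      simpa [smul_smul] using S.smul_mem 2 (hout _ hhalf)
    · exact hout x hx
  have hball : ∀ y : Y, (Homeomorph.unitBall y : Y) ∈ S := by
    intro y
    have hy := S.sub_mem (hfS (j y)) (hW (j y))
    rw [perturbedInclusion_apply hj, add_sub_cancel_left] at hy
    exact (S.smul_mem_iff (div_ne_zero hε two_ne_zero)).1 hy
  refine Submodule.eq_top_iff'.2 fun y => ?_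
  have hy : y = √(1 + ‖y‖ ^ 2) • (Homeomorph.unitBall y : Y) := by
    rw [Homeomorph.unitBall_apply_coe, OpenPartialHomeomorph.univUnitBall_apply, smul_smul,
      mul_inv_cancel₀ (by positivity), one_smul]
  rw [hy]
  exact S.smul_mem _ (hball y)

end PerturbedInclusion

theorem stmt15_general (Y : Type) [NormedAddCommGroup Y] [NormedSpace ℝ Y]
    (W : Subspace ℝ Y)
    (hcard : Cardinal.mk W = Cardinal.mk Y)
    (huncompl : ¬ ∃ P : Y →L[ℝ] W, ∀ w : W, P (w : Y) = w) :
    ∀ ε : ℝ, 0 < ε →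
      ∃ f : W → Y, f 0 = 0 ∧ (∀ x y : W, |‖f x - f y‖ - ‖(x : Y) - (y : Y)‖| ≤ ε) ∧
        (Submodule.span ℝ (Set.range f)).topologicalClosure = ⊤ ∧
        ¬ ∃ (T : Y →L[ℝ] W) (γ : ℝ), 0 < γ ∧ ∀ x : W, ‖T (f x) - x‖ ≤ γ * ε := by
  intro ε hε
  have : Nontrivial W := by
    by_contra hW
    rw [not_nontrivial_iff_subsingleton] at hW
    exact huncompl ⟨0, fun _ => Subsingleton.elim _ _⟩
  obtain ⟨e⟩ : Nonempty (Y ≃ W) := Cardinal.eq.mp hcard.symm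
  obtain ⟨j, hj, hjn⟩ := exists_injective_norm_mem_Ioo e.injective
  have hclose := norm_perturbedInclusion_sub_le (j := j) hε.le
  have hzero : (0 : W) ∉ range j := fun ⟨y, hy⟩ => by
    have h := (hjn y).1
    rw [hy, norm_zero] at h
    linarith
  refine ⟨perturbedInclusion j ε, by simpa using perturbedInclusion_of_notMem_range hzero,
    abs_norm_sub_sub_norm_sub_le hclose, ?_, ?_⟩
  · rw [span_range_perturbedInclusion hj hjn hε.ne']
    exact top_unique (Submodule.le_topologicalClosure _)
  · rintro ⟨T, γ, -, hT⟩
    exact huncompl ⟨T, T.apply_coe_eq_of_forall_norm_sub_le hclose hT⟩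

/-- **Qian's counterexample.** If `X` is a closed uncomplemented subspace of a Banach
space `Y` with `card X = card Y`, then for every `ε > 0` there is a standard `ε`-isometry
`f : X → Y` whose range has dense span in `Y` which is not stable: no bounded operator
`T : Y → X` and `γ > 0` satisfy `‖T (f x) - x‖ ≤ γ ε` for all `x`. -/
theorem stmt15 (Y : Type) [NormedAddCommGroup Y] [NormedSpace ℝ Y] [CompleteSpace Y]
    (W : Subspace ℝ Y) (hW : IsClosed (W : Set Y))
    (hcard : Cardinal.mk W = Cardinal.mk Y)
    (huncompl : ¬ ∃ P : Y →L[ℝ] W, ∀ w : W, P (w : Y) = w) :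
    ∀ ε : ℝ, 0 < ε →
      ∃ f : W → Y, f 0 = 0 ∧ (∀ x y : W, |‖f x - f y‖ - ‖(x : Y) - (y : Y)‖| ≤ ε) ∧
        (Submodule.span ℝ (Set.range f)).topologicalClosure = ⊤ ∧
        ¬ ∃ (T : Y →L[ℝ] W) (γ : ℝ), 0 < γ ∧ ∀ x : W, ‖T (f x) - x‖ ≤ γ * ε :=
  stmt15_general Y W hcard huncompl
end

section
/- Let X be a Banach space, Y a Banach space, (x*_n) a weak*-null sequence in the dual unit ball of X*, and (φ_n) a sequence in the unit ball of Y* such that |⟨φ_n, f(x)⟩ − ⟨x*_n, x⟩| ≤ 4ε for all x ∈ X and all n, where f : X → Y is any map. If Y is separable, then setting K = {ψ ∈ B_{Y*} : |⟨ψ, f(x)⟩| ≤ 4ε for all x ∈ X}, the weak*-distance from φ_n to K tends to 0; in particular there exists a sequence ψ_n ∈ K with φ_n − ψ_n → 0 in the weak* topology of Y*. -/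
/-!
By Banach–Alaoglu the `φ n` lie in the weak*-compact unit ball, and every weak* cluster
point `χ` of `(φ n)` lies in `K`: `χ (f x)` is a cluster value of `φ n (f x)`, which stays
within `4ε` of `x' n x → 0`. Hence `(φ n)` eventually enters every weak* thickening `K + V`.
Testing only against a dense sequence of `Y` makes countably many thickenings suffice, so a
diagonal choice gives `ψ n ∈ K` with `(φ n - ψ n) y → 0` on that sequence, and the bound
`‖φ n - ψ n‖ ≤ 2` spreads the convergence to all of `Y`.
-/

open Filter Topology Pointwise Metric WeakDual TopologicalSpace

theorem MapClusterPt.mem_of_tendsto_of_isClosed {ι X Y : Type*} [TopologicalSpace X]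
    [TopologicalSpace Y] {l : Filter ι} {u : ι → X} {v : ι → Y} {a : X} {b : Y}
    (hu : MapClusterPt a l u) (hv : Tendsto v l (𝓝 b)) {C : Set (X × Y)} (hC : IsClosed C)
    (h : ∀ᶠ i in l, (u i, v i) ∈ C) : (a, b) ∈ C := by
  have hpair : MapClusterPt (a, b) l fun i => (u i, v i) := by
    rw [((𝓝 a).basis_sets.prod_nhds (𝓝 b).basis_sets).mapClusterPt_iff_frequently]
    rintro ⟨s, t⟩ ⟨hs, ht⟩
    exact (hu.frequently hs).and_eventually (hv ht)
  exact hC.closure_subset (hpair.mem_closure_of_mem _ h)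

theorem add_mem_nhdsSet_of_mem_nhds_zero {G : Type*} [AddGroup G] [TopologicalSpace G]
    [IsTopologicalAddGroup G] {K V : Set G} (hV : V ∈ 𝓝 0) : K + V ∈ 𝓝ˢ K :=
  mem_nhdsSet_iff_forall.2 fun a ha =>
    mem_of_superset (singleton_add_mem_nhds_of_nhds_zero a hV)
      (Set.add_subset_add_right (Set.singleton_subset_iff.2 ha))

theorem Nat.exists_tendsto_atTop_eventually (P : ℕ → ℕ → Prop) (h : ∀ m, ∀ᶠ n in atTop, P m n) :
    ∃ M : ℕ → ℕ, Tendsto M atTop atTop ∧ ∀ᶠ n in atTop, P (M n) n := by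
  classical
  refine ⟨fun n => Nat.findGreatest (P · n) n, tendsto_atTop_atTop.2 fun m => ?_, ?_⟩
  · obtain ⟨N, hN⟩ := eventually_atTop.1 (h m)
    exact ⟨max m N, fun n hn =>
      Nat.le_findGreatest (le_of_max_le_left hn) (hN n (le_of_max_le_right hn))⟩
  · filter_upwards [h 0] with n hn
    exact Nat.findGreatest_spec (P := (P · n)) (zero_le n) hn

theorem Filter.exists_tendsto_sub_of_eventually_mem_add {α : Type*} [AddCommGroup α]
    {G : Filter α} [G.IsCountablyGenerated] {K : Set α} (hK : K.Nonempty) {u : ℕ → α}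
    (h : ∀ s ∈ G, ∀ᶠ n in atTop, u n ∈ K + s) :
    ∃ a : ℕ → α, (∀ n, a n ∈ K) ∧ Tendsto (fun n => u n - a n) atTop G := by
  obtain ⟨s, hs⟩ := G.exists_antitone_basis
  obtain ⟨M, hM, hMu⟩ := Nat.exists_tendsto_atTop_eventually (fun m n => u n ∈ K + s m)
    fun m => h _ (hs.mem m)
  have hchoice : ∀ n, ∃ a ∈ K, u n ∈ K + s (M n) → u n - a ∈ s (M n) := by
    intro n
    by_cases hn : u n ∈ K + s (M n)
    · obtain ⟨a, ha, v, hv, hav⟩ := Set.mem_add.1 hn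
      exact ⟨a, ha, fun _ => by rwa [← hav, add_sub_cancel_left]⟩
    · exact ⟨hK.some, hK.some_mem, (absurd · hn)⟩
  choose a haK ha using hchoice
  refine ⟨a, haK, hs.1.tendsto_right_iff.2 fun m _ => ?_⟩
  filter_upwards [hMu, hM.eventually_ge_atTop m] with n hn hmn
  exact hs.antitone hmn (ha n hn)

theorem ContinuousLinearMap.tendsto_zero_of_denseRange {ι 𝕜 E F D : Type*}
    [NontriviallyNormedField 𝕜] [SeminormedAddCommGroup E] [NormedSpace 𝕜 E]
    [SeminormedAddCommGroup F] [NormedSpace 𝕜 F]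
    {l : Filter ι} {g : ι → E →L[𝕜] F} {C : ℝ} (hg : ∀ i, ‖g i‖ ≤ C) {e : D → E}
    (he : DenseRange e) (h : ∀ d, Tendsto (fun i => g i (e d)) l (𝓝 0)) (x : E) :
    Tendsto (fun i => g i x) l (𝓝 0) := by
  have hequi : Equicontinuous fun i => (g i : E → F) :=
    ((NormedSpace.equicontinuous_TFAE g).out 5 1).mp (⟨C, hg⟩ : ∃ C, ∀ i, ‖g i‖ ≤ C)
  exact he.induction_on x (hequi.isClosed_setOfPred_tendsto continuous_const) h

theorem WeakDual.exists_tendsto_sub_of_mapClusterPt_mem {𝕜 E : Type*}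
    [NontriviallyNormedField 𝕜] [ProperSpace 𝕜] [SeminormedAddCommGroup E] [NormedSpace 𝕜 E]
    [SeparableSpace E] {r : ℝ} {φ : ℕ → WeakDual 𝕜 E} {K : Set (WeakDual 𝕜 E)}
    (hφ : ∀ n, φ n ∈ toStrongDual ⁻¹' closedBall 0 r) (hKr : K ⊆ toStrongDual ⁻¹' closedBall 0 r)
    (hK : ∀ χ ∈ toStrongDual ⁻¹' closedBall 0 r, MapClusterPt χ atTop φ → χ ∈ K) :
    ∃ ψ : ℕ → WeakDual 𝕜 E, (∀ n, ψ n ∈ K) ∧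
      ∀ y, Tendsto (fun n => φ n y - ψ n y) atTop (𝓝 0) := by
  have hB := WeakDual.isCompact_closedBall (𝕜 := 𝕜) (E := E) 0 r
  have hφK : Tendsto φ atTop (𝓝ˢ K) :=
    hB.tendsto_nhdsSet_of_mapClusterPt (Eventually.of_forall hφ) hK
  obtain ⟨χ, hχB, hχ⟩ :=
    hB.exists_mapClusterPt (f := atTop) (tendsto_principal.2 (Eventually.of_forall hφ))
  -- `comap T (𝓝 0)` is a countably generated coarsening of the weak* neighbourhoods of `0`.
  set T : WeakDual 𝕜 E → ℕ → 𝕜 := fun χ k => χ (denseSeq E k)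
  have hT : Continuous T := continuous_pi fun k => eval_continuous _
  have hφ_add : ∀ s ∈ comap T (𝓝 0), ∀ᶠ n in atTop, φ n ∈ K + s := by
    rintro s ⟨W, hW, hWs⟩
    have hTW : T ⁻¹' W ∈ 𝓝 0 := hT.continuousAt.preimage_mem_nhds (show W ∈ 𝓝 (T 0) from hW)
    filter_upwards [hφK (add_mem_nhdsSet_of_mem_nhds_zero hTW)] with n hn
    exact Set.add_subset_add_left hWs hn
  obtain ⟨ψ, hψK, hψ⟩ := exists_tendsto_sub_of_eventually_mem_add ⟨χ, hK χ hχB hχ⟩ hφ_add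
  refine ⟨ψ, hψK, ContinuousLinearMap.tendsto_zero_of_denseRange (C := r + r)
    (g := fun n => toStrongDual (φ n - ψ n)) (fun n => ?_) (denseRange_denseSeq E)
    fun k => tendsto_pi_nhds.1 (tendsto_comap_iff.1 hψ) k⟩
  rw [map_sub]
  exact (norm_sub_le _ _).trans (add_le_add (mem_closedBall_zero_iff.1 (hφ n))
    (mem_closedBall_zero_iff.1 (hKr (hψK n))))

theorem stmt18_general (X Y : Type) [NormedAddCommGroup X] [NormedSpace ℝ X]
    [NormedAddCommGroup Y] [NormedSpace ℝ Y]
    [TopologicalSpace.SeparableSpace Y]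
    (ε : ℝ) (f : X → Y)
    (x' : ℕ → StrongDual ℝ X)
    (hx'null : ∀ x : X, Tendsto (fun n => x' n x) atTop (nhds 0))
    (φ : ℕ → StrongDual ℝ Y) (hφball : ∀ n, ‖φ n‖ ≤ 1)
    (hφ : ∀ (n : ℕ) (x : X), |φ n (f x) - x' n x| ≤ 4 * ε) :
    ∃ ψ : ℕ → StrongDual ℝ Y,
      (∀ n, ψ n ∈ {ψ : StrongDual ℝ Y | ‖ψ‖ ≤ 1 ∧ ∀ x : X, |ψ (f x)| ≤ 4 * ε}) ∧
      ∀ y : Y, Tendsto (fun n => φ n y - ψ n y) atTop (nhds 0) := by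
  set K : Set (StrongDual ℝ Y) := {ψ | ‖ψ‖ ≤ 1 ∧ ∀ x : X, |ψ (f x)| ≤ 4 * ε}
  have hcluster : ∀ χ ∈ toStrongDual ⁻¹' closedBall 0 1,
      MapClusterPt χ atTop (fun n => StrongDual.toWeakDual (φ n)) → χ ∈ toStrongDual ⁻¹' K := by
    refine fun χ hχB hχ => ⟨by simpa using hχB, fun x => ?_⟩
    have hχx := hχ.continuousAt_comp (eval_continuous (f x)).continuousAt
    simpa using hχx.mem_of_tendsto_of_isClosed (hx'null x)
      (isClosed_le (continuous_fst.sub continuous_snd).abs continuous_const)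
      (Eventually.of_forall fun n => hφ n x)
  obtain ⟨ψ, hψK, hψ⟩ := exists_tendsto_sub_of_mapClusterPt_mem (r := 1)
    (fun n => by simpa using hφball n) (fun ψ hψ => by simpa using hψ.1) hcluster
  exact ⟨fun n => toStrongDual (ψ n), hψK, hψ⟩

/-- Key compactness step: if `(x*_n)` is a weak*-null sequence in `B_{X*}`, `(φ_n) ⊆ B_{Y*}`
satisfies `|⟨φ_n, f x⟩ - ⟨x*_n, x⟩| ≤ 4ε` for all `x, n`, and `Y` is separable, then with
`K = {ψ ∈ B_{Y*} : |⟨ψ, f x⟩| ≤ 4ε ∀ x}` there is a sequence `ψ_n ∈ K` with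
`φ_n - ψ_n → 0` in the weak* topology of `Y*`. -/
theorem stmt18 (X Y : Type) [NormedAddCommGroup X] [NormedSpace ℝ X] [CompleteSpace X]
    [NormedAddCommGroup Y] [NormedSpace ℝ Y] [CompleteSpace Y]
    [TopologicalSpace.SeparableSpace Y]
    (ε : ℝ) (hε : 0 ≤ ε) (f : X → Y)
    (x' : ℕ → StrongDual ℝ X) (hx'ball : ∀ n, ‖x' n‖ ≤ 1)
    (hx'null : ∀ x : X, Tendsto (fun n => x' n x) atTop (nhds 0))
    (φ : ℕ → StrongDual ℝ Y) (hφball : ∀ n, ‖φ n‖ ≤ 1)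
    (hφ : ∀ (n : ℕ) (x : X), |φ n (f x) - x' n x| ≤ 4 * ε) :
    ∃ ψ : ℕ → StrongDual ℝ Y,
      (∀ n, ψ n ∈ {ψ : StrongDual ℝ Y | ‖ψ‖ ≤ 1 ∧ ∀ x : X, |ψ (f x)| ≤ 4 * ε}) ∧
      ∀ y : Y, Tendsto (fun n => φ n y - ψ n y) atTop (nhds 0) :=
  stmt18_general X Y ε f x' hx'null φ hφball hφ
end
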